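/- arXiv:2503.12746 — 13 statements merged into one kernel-verified Lean document; each statement's English description precedes it below -/
import Mathlib

section
/- Let E be a Euclidean space (e.g. EuclideanSpace ℝ (Fin d)), let f, g : ℝ → E be continuous, and let r ≥ 0. Let x₁ ≤ x₂ ≤ y₂ ≤ y₁ and p ≤ q be real numbers. If the Fréchet distance of f on [x₁,y₁] and g on [p,q] is at most r, and the Fréchet distance of f on [x₂,y₂] and g on [p,q] is at most r, then the Fréchet distance of f on [x₁,y₂] and g on [p,q] is at most r. -/
/-- The Fréchet distance of `f` on `[a,b]` and `g` on `[c,d]` is at most `r`: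
for every `ε > 0` there are continuous monotone nondecreasing reparameterizations
`φ, ψ : [0,1] → ℝ` with the prescribed endpoints such that the matched points are
within distance `r + ε`. -/
def FrechetLE {E : Type*} [PseudoMetricSpace E] (f g : ℝ → E)
    (a b c d r : ℝ) : Prop :=
  ∀ ε > 0, ∃ φ ψ : ℝ → ℝ,
    ContinuousOn φ (Set.Icc 0 1) ∧ ContinuousOn ψ (Set.Icc 0 1) ∧
    MonotoneOn φ (Set.Icc 0 1) ∧ MonotoneOn ψ (Set.Icc 0 1) ∧
    φ 0 = a ∧ φ 1 = b ∧ ψ 0 = c ∧ ψ 1 = d ∧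
    ∀ t ∈ Set.Icc (0:ℝ) 1, dist (f (φ t)) (g (ψ t)) ≤ r + ε

private lemma contOn_union_closed {α β : Type*} [TopologicalSpace α] [TopologicalSpace β]
    {s t : Set α} {f : α → β} (hs : IsClosed s) (ht : IsClosed t)
    (h1 : ContinuousOn f s) (h2 : ContinuousOn f t) : ContinuousOn f (s ∪ t) := by
  intro x hx
  rw [ContinuousWithinAt, nhdsWithin_union, Filter.tendsto_sup]
  constructor
  · by_cases h : x ∈ s
    · exact h1 x h
    · exact continuousWithinAt_of_notMem_closure (by rwa [hs.closure_eq])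
  · by_cases h : x ∈ t
    · exact h2 x h
    · exact continuousWithinAt_of_notMem_closure (by rwa [ht.closure_eq])

/-- Inverse of a continuous strictly monotone function on `[0,1]` with prescribed endpoints. -/
private lemma inv_aux {p q : ℝ} (hpq : p < q) (w : ℝ → ℝ)
    (hc : ContinuousOn w (Set.Icc 0 1)) (hs : StrictMonoOn w (Set.Icc 0 1))
    (h0 : w 0 = p) (h1 : w 1 = q) :
    ∃ τ : ℝ → ℝ, ContinuousOn τ (Set.Icc p q) ∧ MonotoneOn τ (Set.Icc p q) ∧
      (∀ u ∈ Set.Icc p q, τ u ∈ Set.Icc (0:ℝ) 1 ∧ w (τ u) = u) ∧ τ p = 0 ∧ τ q = 1 := by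
  have mem0 : (0:ℝ) ∈ Set.Icc (0:ℝ) 1 := by norm_num
  have mem1 : (1:ℝ) ∈ Set.Icc (0:ℝ) 1 := by norm_num
  have hmono : MonotoneOn w (Set.Icc 0 1) := hs.monotoneOn
  have hmaps : ∀ s ∈ Set.Icc (0:ℝ) 1, w s ∈ Set.Icc p q := fun s hsm =>
    ⟨h0 ▸ hmono mem0 hsm hsm.1, h1 ▸ hmono hsm mem1 hsm.2⟩
  have hsurj : Set.Icc p q ⊆ w '' Set.Icc 0 1 := by
    have := intermediate_value_Icc zero_le_one hc
    rwa [h0, h1] at this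
  have hbij : Function.Bijective
      (fun s : Set.Icc (0:ℝ) 1 => (⟨w s, hmaps s s.2⟩ : Set.Icc p q)) := by
    constructor
    · intro a b hab
      exact Subtype.ext (hs.injOn a.2 b.2 (congrArg Subtype.val hab))
    · intro u
      obtain ⟨s, hsm, hws⟩ := hsurj u.2
      exact ⟨⟨s, hsm⟩, Subtype.ext hws⟩
  let e : Set.Icc (0:ℝ) 1 ≃ Set.Icc p q := Equiv.ofBijective _ hbij
  have hcont : Continuous e := Continuous.subtype_mk (hc.restrict) _
  let h : Set.Icc (0:ℝ) 1 ≃ₜ Set.Icc p q := hcont.homeoOfEquivCompactToT2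
  set τ : ℝ → ℝ := fun u => ((h.symm (Set.projIcc p q hpq.le u) : Set.Icc (0:ℝ) 1) : ℝ) with hτ
  have hτcont : Continuous τ :=
    continuous_subtype_val.comp (h.symm.continuous.comp (continuous_projIcc))
  have key : ∀ u ∈ Set.Icc p q, τ u ∈ Set.Icc (0:ℝ) 1 ∧ w (τ u) = u := by
    intro u hu
    refine ⟨(h.symm (Set.projIcc p q hpq.le u)).2, ?_⟩
    have := h.apply_symm_apply (Set.projIcc p q hpq.le u)
    have h3 : w (τ u) = ((Set.projIcc p q hpq.le u : Set.Icc p q) : ℝ) := congrArg Subtype.val this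
    rwa [Set.projIcc_of_mem hpq.le hu] at h3
  have hend : ∀ s ∈ Set.Icc (0:ℝ) 1, τ (w s) = s := by
    intro s hsm
    have hmem : w s ∈ Set.Icc p q := hmaps s hsm
    have heq : Set.projIcc p q hpq.le (w s) = e ⟨s, hsm⟩ := by
      apply Subtype.ext
      simp [Set.projIcc_of_mem hpq.le hmem, e]
    have h2 : h.symm (Set.projIcc p q hpq.le (w s)) = ⟨s, hsm⟩ := by
      rw [heq]
      exact h.symm_apply_apply _
    simp [τ, h2]
  refine ⟨τ, hτcont.continuousOn, ?_, key, ?_, ?_⟩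
  · intro u hu v hv huv
    by_contra hlt
    push_neg at hlt
    have := hs ((key v hv).1) ((key u hu).1) hlt
    rw [(key u hu).2, (key v hv).2] at this
    exact absurd huv (not_le.mpr this)
  · have := hend 0 mem0; rwa [h0] at this
  · have := hend 1 mem1; rwa [h1] at this

/-- Gluing two matchings that share the same `g`-side reparameterization, whose
`f`-side reparameterizations cross. -/
private lemma glue_aux {E : Type*} [PseudoMetricSpace E] (f g : ℝ → E)
    (ρ : ℝ) (A B Ψ : ℝ → ℝ)
    (hAc : ContinuousOn A (Set.Icc 0 1)) (hBc : ContinuousOn B (Set.Icc 0 1))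
    (hΨc : ContinuousOn Ψ (Set.Icc 0 1))
    (hAm : MonotoneOn A (Set.Icc 0 1)) (hBm : MonotoneOn B (Set.Icc 0 1))
    (hΨm : MonotoneOn Ψ (Set.Icc 0 1))
    (h0 : A 0 ≤ B 0) (h1 : B 1 ≤ A 1)
    (hAd : ∀ t ∈ Set.Icc (0:ℝ) 1, dist (f (A t)) (g (Ψ t)) ≤ ρ)
    (hBd : ∀ t ∈ Set.Icc (0:ℝ) 1, dist (f (B t)) (g (Ψ t)) ≤ ρ) :
    ∃ φ ψ : ℝ → ℝ, ContinuousOn φ (Set.Icc 0 1) ∧ ContinuousOn ψ (Set.Icc 0 1) ∧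
      MonotoneOn φ (Set.Icc 0 1) ∧ MonotoneOn ψ (Set.Icc 0 1) ∧
      φ 0 = A 0 ∧ φ 1 = B 1 ∧ ψ 0 = Ψ 0 ∧ ψ 1 = Ψ 1 ∧
      ∀ t ∈ Set.Icc (0:ℝ) 1, dist (f (φ t)) (g (ψ t)) ≤ ρ := by
  classical
  have hD : ContinuousOn (fun t => A t - B t) (Set.Icc 0 1) := hAc.sub hBc
  have h0' : (0:ℝ) ∈ Set.Icc (A 0 - B 0) (A 1 - B 1) := ⟨sub_nonpos.mpr h0, sub_nonneg.mpr h1⟩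
  obtain ⟨c, hcmem, hc⟩ := intermediate_value_Icc zero_le_one hD h0'
  have hAB : A c = B c := sub_eq_zero.mp hc
  set φ : ℝ → ℝ := fun t => if t ≤ c then A t else B t with hφ
  have hφeqA : Set.EqOn φ A (Set.Icc 0 c) := fun t htm => if_pos htm.2
  have hφeqB : Set.EqOn φ B (Set.Icc c 1) := by
    intro t htm
    by_cases h : t ≤ c
    · have : t = c := le_antisymm h htm.1
      simp [φ, this, hAB]
    · exact if_neg h
  refine ⟨φ, Ψ, ?_, hΨc, ?_, hΨm, ?_, ?_, rfl, rfl, ?_⟩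
  · rw [← Set.Icc_union_Icc_eq_Icc hcmem.1 hcmem.2]
    exact contOn_union_closed isClosed_Icc isClosed_Icc
      ((hAc.mono (Set.Icc_subset_Icc_right hcmem.2)).congr hφeqA)
      ((hBc.mono (Set.Icc_subset_Icc_left hcmem.1)).congr hφeqB)
  · intro s hsm t htm hst
    by_cases hsc : s ≤ c
    · by_cases htc : t ≤ c
      · simpa [φ, hsc, htc] using hAm hsm htm hst
      · have h1' : A s ≤ A c := hAm hsm hcmem hsc
        have h2' : B c ≤ B t := hBm hcmem htm (le_of_not_ge htc)
        simp only [φ, if_pos hsc, if_neg htc]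
        linarith [hAB]
    · have htc : ¬ t ≤ c := fun h => hsc (hst.trans h)
      simpa [φ, hsc, htc] using hBm hsm htm hst
  · simp [φ, hcmem.1]
  · by_cases h : (1:ℝ) ≤ c
    · have hceq : c = 1 := le_antisymm hcmem.2 h
      subst hceq
      simp [φ, h, hAB]
    · simp [φ, h]
  · intro t htm
    by_cases h : t ≤ c
    · simpa [φ, h] using hAd t htm
    · simpa [φ, h] using hBd t htm

/-- Strictification: a monotone reparameterization can be perturbed into a strictly
monotone one with the same endpoints, moving the matched points on the curve `g`
by at most `ε`. -/
private lemma strictify_aux {E : Type*} [PseudoMetricSpace E] (g : ℝ → E)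
    {p q ε : ℝ} (hlt : p < q) (hε : 0 < ε) (hg : Continuous g)
    (ψ : ℝ → ℝ) (hc : ContinuousOn ψ (Set.Icc 0 1)) (hm : MonotoneOn ψ (Set.Icc 0 1))
    (h0 : ψ 0 = p) (h1 : ψ 1 = q) :
    ∃ w : ℝ → ℝ, ContinuousOn w (Set.Icc 0 1) ∧ MonotoneOn w (Set.Icc 0 1) ∧
      StrictMonoOn w (Set.Icc 0 1) ∧ w 0 = p ∧ w 1 = q ∧
      (∀ t ∈ Set.Icc (0:ℝ) 1, w t ∈ Set.Icc p q) ∧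
      (∀ t ∈ Set.Icc (0:ℝ) 1, dist (g (ψ t)) (g (w t)) ≤ ε) := by
  have mem0 : (0:ℝ) ∈ Set.Icc (0:ℝ) 1 := by norm_num
  have mem1 : (1:ℝ) ∈ Set.Icc (0:ℝ) 1 := by norm_num
  have hψr : ∀ t ∈ Set.Icc (0:ℝ) 1, ψ t ∈ Set.Icc p q := fun t htm =>
    ⟨h0 ▸ hm mem0 htm htm.1, h1 ▸ hm htm mem1 htm.2⟩
  obtain ⟨δ, hδ, hδg⟩ := Metric.uniformContinuousOn_iff.mp
    (isCompact_Icc.uniformContinuousOn_of_continuous hg.continuousOn) ε hε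
  have hqp : 0 < q - p := sub_pos.mpr hlt
  obtain ⟨θ, hθpos, hθ1, hθδ⟩ : ∃ θ : ℝ, 0 < θ ∧ θ ≤ 1 ∧ θ * (q - p) < δ := by
    refine ⟨min 1 (δ / (q - p) / 2), lt_min one_pos (by positivity), min_le_left _ _, ?_⟩
    calc min 1 (δ / (q - p) / 2) * (q - p) ≤ (δ / (q - p) / 2) * (q - p) :=
          mul_le_mul_of_nonneg_right (min_le_right _ _) hqp.le
      _ = δ / 2 := by field_simp
      _ < δ := by linarith
  refine ⟨fun t => (1 - θ) * ψ t + θ * (p + t * (q - p)), ?_, ?_, ?_, ?_, ?_, ?_, ?_⟩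
  · exact (continuousOn_const.mul hc).add
      (continuousOn_const.mul (continuousOn_const.add (continuousOn_id.mul continuousOn_const)))
  · intro s hsm t htm hst
    have h' := hm hsm htm hst
    simp only
    nlinarith [mul_nonneg (sub_nonneg.mpr hθ1) (sub_nonneg.mpr h'),
      mul_nonneg (mul_nonneg hθpos.le (sub_nonneg.mpr hst)) hqp.le]
  · intro s hsm t htm hst
    have h' := hm hsm htm hst.le
    simp only
    nlinarith [mul_nonneg (sub_nonneg.mpr hθ1) (sub_nonneg.mpr h'),
      mul_pos (mul_pos hθpos (sub_pos.mpr hst)) hqp]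
  · simp only; rw [h0]; ring
  · simp only; rw [h1]; ring
  · intro t htm
    obtain ⟨hl, hr'⟩ := hψr t htm
    obtain ⟨ht0, ht1⟩ := htm
    simp only [Set.mem_Icc]
    constructor
    · nlinarith [mul_nonneg (sub_nonneg.mpr hθ1) (sub_nonneg.mpr hl),
        mul_nonneg (mul_nonneg hθpos.le ht0) hqp.le]
    · nlinarith [mul_nonneg (sub_nonneg.mpr hθ1) (sub_nonneg.mpr hr'),
        mul_nonneg (mul_nonneg hθpos.le (sub_nonneg.mpr ht1)) hqp.le]
  · intro t htm
    apply le_of_lt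
    obtain ⟨hl, hr'⟩ := hψr t htm
    obtain ⟨ht0, ht1⟩ := htm
    have hmem2 : (1 - θ) * ψ t + θ * (p + t * (q - p)) ∈ Set.Icc p q := by
      constructor
      · nlinarith [mul_nonneg (sub_nonneg.mpr hθ1) (sub_nonneg.mpr hl),
          mul_nonneg (mul_nonneg hθpos.le ht0) hqp.le]
      · nlinarith [mul_nonneg (sub_nonneg.mpr hθ1) (sub_nonneg.mpr hr'),
          mul_nonneg (mul_nonneg hθpos.le (sub_nonneg.mpr ht1)) hqp.le]
    apply hδg _ ⟨hl, hr'⟩ _ hmem2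
    rw [Real.dist_eq]
    refine lt_of_le_of_lt (abs_le.mpr ⟨?_, ?_⟩) hθδ
    · nlinarith [mul_nonneg hθpos.le (sub_nonneg.mpr hl),
        mul_nonneg (mul_nonneg hθpos.le (sub_nonneg.mpr ht1)) hqp.le]
    · nlinarith [mul_nonneg hθpos.le (sub_nonneg.mpr hr'),
        mul_nonneg (mul_nonneg hθpos.le ht0) hqp.le]

theorem frechet_planarity {n : ℕ} (f g : ℝ → EuclideanSpace ℝ (Fin n))
    (hf : Continuous f) (hg : Continuous g) (r : ℝ) (hr : 0 ≤ r)
    (x₁ x₂ y₂ y₁ p q : ℝ)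
    (h₁ : x₁ ≤ x₂) (h₂ : x₂ ≤ y₂) (h₃ : y₂ ≤ y₁) (hpq : p ≤ q)
    (H₁ : FrechetLE f g x₁ y₁ p q r) (H₂ : FrechetLE f g x₂ y₂ p q r) :
    FrechetLE f g x₁ y₂ p q r := by
  intro ε hε
  have hε2 : 0 < ε / 2 := by positivity
  obtain ⟨φ₁, ψ₁, hφ₁c, hψ₁c, hφ₁m, hψ₁m, hφ₁0, hφ₁1, hψ₁0, hψ₁1, hd₁⟩ := H₁ (ε/2) hε2
  obtain ⟨φ₂, ψ₂, hφ₂c, hψ₂c, hφ₂m, hψ₂m, hφ₂0, hφ₂1, hψ₂0, hψ₂1, hd₂⟩ := H₂ (ε/2) hε2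
  have mem0 : (0:ℝ) ∈ Set.Icc (0:ℝ) 1 := by norm_num
  have mem1 : (1:ℝ) ∈ Set.Icc (0:ℝ) 1 := by norm_num
  have hεle : r + ε / 2 ≤ r + ε := by linarith
  rcases eq_or_lt_of_le hpq with heq | hlt
  · -- degenerate case `p = q`: the `g`-side reparameterizations are constant.
    subst heq
    have hψ1const : ∀ t ∈ Set.Icc (0:ℝ) 1, ψ₁ t = p := fun t htm =>
      le_antisymm (hψ₁1 ▸ hψ₁m htm mem1 htm.2) (hψ₁0 ▸ hψ₁m mem0 htm htm.1)
    have hψ2const : ∀ t ∈ Set.Icc (0:ℝ) 1, ψ₂ t = p := fun t htm =>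
      le_antisymm (hψ₂1 ▸ hψ₂m htm mem1 htm.2) (hψ₂0 ▸ hψ₂m mem0 htm htm.1)
    obtain ⟨φ, ψ, hc1, hc2, hm1, hm2, he1, he2, he3, he4, hd⟩ :=
      glue_aux f g (r + ε) φ₁ φ₂ ψ₁ hφ₁c hφ₂c hψ₁c hφ₁m hφ₂m hψ₁m
        (by rw [hφ₁0, hφ₂0]; exact h₁) (by rw [hφ₁1, hφ₂1]; exact h₃)
        (fun t ht => (hd₁ t ht).trans hεle)
        (fun t ht => by
          rw [hψ1const t ht, ← hψ2const t ht]
          exact (hd₂ t ht).trans hεle)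
    exact ⟨φ, ψ, hc1, hc2, hm1, hm2, by rwa [hφ₁0] at he1, by rwa [hφ₂1] at he2,
      by rwa [hψ₁0] at he3, by rwa [hψ₁1] at he4, hd⟩
  · -- main case `p < q`
    obtain ⟨w₁, hw₁c, hw₁m, hw₁s, hw₁0, hw₁1, hw₁mem, hw₁close⟩ :=
      strictify_aux g hlt hε2 hg ψ₁ hψ₁c hψ₁m hψ₁0 hψ₁1
    obtain ⟨w₂, hw₂c, hw₂m, hw₂s, hw₂0, hw₂1, hw₂mem, hw₂close⟩ :=
      strictify_aux g hlt hε2 hg ψ₂ hψ₂c hψ₂m hψ₂0 hψ₂1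
    obtain ⟨τ, hτc, hτm, hτkey, hτp, hτq⟩ := inv_aux hlt w₁ hw₁c hw₁s hw₁0 hw₁1
    have hσmem : ∀ t ∈ Set.Icc (0:ℝ) 1, τ (w₂ t) ∈ Set.Icc (0:ℝ) 1 :=
      fun t ht => (hτkey _ (hw₂mem t ht)).1
    have hσc : ContinuousOn (fun t => τ (w₂ t)) (Set.Icc 0 1) := hτc.comp hw₂c hw₂mem
    have hσm : MonotoneOn (fun t => τ (w₂ t)) (Set.Icc 0 1) := fun s hsm t htm hst =>
      hτm (hw₂mem s hsm) (hw₂mem t htm) (hw₂m hsm htm hst)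
    have hAc : ContinuousOn (fun t => φ₁ (τ (w₂ t))) (Set.Icc 0 1) := hφ₁c.comp hσc hσmem
    have hAm : MonotoneOn (fun t => φ₁ (τ (w₂ t))) (Set.Icc 0 1) := fun s hsm t htm hst =>
      hφ₁m (hσmem s hsm) (hσmem t htm) (hσm hsm htm hst)
    have hA0 : φ₁ (τ (w₂ 0)) = x₁ := by rw [hw₂0, hτp, hφ₁0]
    have hA1 : φ₁ (τ (w₂ 1)) = y₁ := by rw [hw₂1, hτq, hφ₁1]
    have hAd : ∀ t ∈ Set.Icc (0:ℝ) 1, dist (f (φ₁ (τ (w₂ t)))) (g (w₂ t)) ≤ r + ε := by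
      intro t htm
      obtain ⟨hsmem, hws⟩ := hτkey _ (hw₂mem t htm)
      calc dist (f (φ₁ (τ (w₂ t)))) (g (w₂ t))
          = dist (f (φ₁ (τ (w₂ t)))) (g (w₁ (τ (w₂ t)))) := by rw [hws]
        _ ≤ dist (f (φ₁ (τ (w₂ t)))) (g (ψ₁ (τ (w₂ t))))
            + dist (g (ψ₁ (τ (w₂ t)))) (g (w₁ (τ (w₂ t)))) := dist_triangle _ _ _
        _ ≤ (r + ε / 2) + ε / 2 := add_le_add (hd₁ _ hsmem) (hw₁close _ hsmem)
        _ = r + ε := by ring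
    have hBd : ∀ t ∈ Set.Icc (0:ℝ) 1, dist (f (φ₂ t)) (g (w₂ t)) ≤ r + ε := by
      intro t htm
      calc dist (f (φ₂ t)) (g (w₂ t))
          ≤ dist (f (φ₂ t)) (g (ψ₂ t)) + dist (g (ψ₂ t)) (g (w₂ t)) := dist_triangle _ _ _
        _ ≤ (r + ε / 2) + ε / 2 := add_le_add (hd₂ t htm) (hw₂close t htm)
        _ = r + ε := by ring
    obtain ⟨φ, ψ, hc1, hc2, hm1, hm2, he1, he2, he3, he4, hd⟩ :=
      glue_aux f g (r + ε) (fun t => φ₁ (τ (w₂ t))) φ₂ w₂ hAc hφ₂c hw₂c hAm hφ₂m hw₂m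
        (by show φ₁ (τ (w₂ 0)) ≤ φ₂ 0; rw [hA0, hφ₂0]; exact h₁)
        (by show φ₂ 1 ≤ φ₁ (τ (w₂ 1)); rw [hA1, hφ₂1]; exact h₃) hAd hBd
    exact ⟨φ, ψ, hc1, hc2, hm1, hm2, he1.trans hA0,
      by rwa [hφ₂1] at he2, by rwa [hw₂0] at he3, by rwa [hw₂1] at he4, hd⟩
end

section
/- Let E be a metric space, let p, w : ℕ → E, let r ≥ 0, and let u ≤ v and i₁ ≤ i₂ ≤ j₂ ≤ j₁ be natural numbers with i₂ ≤ j₂. If the discrete Fréchet distance of w on [u,v] and p on [i₁,j₁] is at most r, and the discrete Fréchet distance of w on [u,v] and p on [i₂,j₂] is at most r, then the discrete Fréchet distance of w on [u,v] and p on [i₁,j₂] is at most r. -/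
/-- A coupling of `p` on `[a,b]` with `q` on `[c,d]`: a finite sequence of index
pairs starting at `(a,c)`, ending at `(b,d)`, where each step increments the first
index, the second index, or both, by one. -/
def IsCoupling (a b c d : ℕ) (K : ℕ) (σ : ℕ → ℕ × ℕ) : Prop :=
  σ 0 = (a, c) ∧ σ K = (b, d) ∧
  ∀ k < K, σ (k+1) = ((σ k).1 + 1, (σ k).2) ∨
           σ (k+1) = ((σ k).1, (σ k).2 + 1) ∨
           σ (k+1) = ((σ k).1 + 1, (σ k).2 + 1)

/-- The discrete Fréchet distance of `p` on `[a,b]` and `q` on `[c,d]` is at most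
`r`: there is a coupling all of whose matched pairs are within distance `r`. -/
def DiscreteFrechetLE {E : Type*} [PseudoMetricSpace E] (p q : ℕ → E)
    (a b c d : ℕ) (r : ℝ) : Prop :=
  ∃ (K : ℕ) (σ : ℕ → ℕ × ℕ), IsCoupling a b c d K σ ∧
    ∀ k ≤ K, dist (p (σ k).1) (q (σ k).2) ≤ r

namespace DFAux

lemma mono_of_step {f : ℕ → ℕ} {K : ℕ} (h : ∀ k < K, f k ≤ f (k+1))
    {k l : ℕ} (hkl : k ≤ l) (hlK : l ≤ K) : f k ≤ f l := by
  induction l with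
  | zero =>
    have : k = 0 := by omega
    subst this; exact le_refl _
  | succ n ih =>
    rcases Nat.lt_or_ge k (n+1) with h' | h'
    · exact le_trans (ih (by omega) (by omega)) (h n (by omega))
    · have : k = n + 1 := by omega
      subst this; exact le_refl _

lemma coupling_step {a b c d K : ℕ} {σ : ℕ → ℕ × ℕ} (h : IsCoupling a b c d K σ)
    {k : ℕ} (hk : k < K) :
    (σ k).1 ≤ (σ (k+1)).1 ∧ (σ (k+1)).1 ≤ (σ k).1 + 1 ∧
    (σ k).2 ≤ (σ (k+1)).2 ∧ (σ (k+1)).2 ≤ (σ k).2 + 1 := by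
  rcases h.2.2 k hk with h' | h' | h' <;> rw [h'] <;> simp

lemma exists_eq_of_step {f : ℕ → ℕ} {K t : ℕ}
    (h : ∀ k < K, f (k+1) ≤ f k + 1) (h0 : f 0 ≤ t) (hK : t ≤ f K) :
    ∃ k ≤ K, f k = t := by
  classical
  have hex : ∃ k, k ≤ K ∧ t ≤ f k := ⟨K, le_refl _, hK⟩
  obtain ⟨k₀, ⟨hk₀K, hk₀⟩, hmin⟩ :
      ∃ k, (k ≤ K ∧ t ≤ f k) ∧ ∀ j < k, ¬(j ≤ K ∧ t ≤ f j) :=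
    ⟨Nat.find hex, Nat.find_spec hex, fun j hj => Nat.find_min hex hj⟩
  refine ⟨k₀, hk₀K, ?_⟩
  rcases Nat.eq_zero_or_pos k₀ with h' | h'
  · subst h'; omega
  · have hprev := hmin (k₀ - 1) (by omega)
    push_neg at hprev
    have hlt : f (k₀ - 1) < t := hprev (by omega)
    have hstep := h (k₀ - 1) (by omega)
    have he : k₀ - 1 + 1 = k₀ := by omega
    rw [he] at hstep
    omega

/-- Glue a prefix of one coupling to a suffix of another at a common point. -/
lemma glue {E : Type*} [PseudoMetricSpace E] (p q : ℕ → E) {r : ℝ}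
    {a b c d c' d' K₁ K₂ k m : ℕ} {σ₁ σ₂ : ℕ → ℕ × ℕ}
    (h₁ : IsCoupling a b c d K₁ σ₁) (h₂ : IsCoupling a b c' d' K₂ σ₂)
    (hd₁ : ∀ l ≤ K₁, dist (p (σ₁ l).1) (q (σ₁ l).2) ≤ r)
    (hd₂ : ∀ l ≤ K₂, dist (p (σ₂ l).1) (q (σ₂ l).2) ≤ r)
    (hk : k ≤ K₁) (hm : m ≤ K₂) (heq : σ₁ k = σ₂ m) :
    DiscreteFrechetLE p q a b c d' r := by
  refine ⟨k + (K₂ - m), fun l => if l ≤ k then σ₁ l else σ₂ (m + (l - k)), ?_, ?_⟩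
  · refine ⟨by simp [h₁.1], ?_, ?_⟩
    · by_cases hle : k + (K₂ - m) ≤ k
      · have h1 : K₂ = m := by omega
        have h2 : k + (K₂ - m) = k := by omega
        simp only [h2, le_refl, if_true]
        rw [heq, ← h1, h₂.2.1]
      · simp only [if_neg hle]
        have : m + (k + (K₂ - m) - k) = K₂ := by omega
        rw [this, h₂.2.1]
    · intro l hl
      by_cases hcase : l + 1 ≤ k
      · simp only [if_pos hcase, if_pos (by omega : l ≤ k)]
        exact h₁.2.2 l (by omega)
      · simp only [if_neg hcase]
        have hlk : k ≤ l := by omega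
        have hσl : (if l ≤ k then σ₁ l else σ₂ (m + (l - k))) = σ₂ (m + (l - k)) := by
          by_cases h' : l ≤ k
          · have hlk' : l = k := by omega
            subst hlk'
            simp [heq]
          · simp only [if_neg h']
        rw [hσl]
        have h1 : m + (l + 1 - k) = m + (l - k) + 1 := by omega
        rw [h1]
        exact h₂.2.2 (m + (l - k)) (by omega)
  · intro l hl
    by_cases h' : l ≤ k
    · simp only [if_pos h']
      exact hd₁ l (le_trans h' hk)
    · simp only [if_neg h']
      exact hd₂ (m + (l - k)) (by omega)

end DFAux

theorem discrete_frechet_planarity {E : Type*} [MetricSpace E]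
    (p w : ℕ → E) (r : ℝ) (hr : 0 ≤ r)
    (u v i₁ i₂ j₂ j₁ : ℕ) (huv : u ≤ v)
    (h₁ : i₁ ≤ i₂) (h₂ : i₂ ≤ j₂) (h₃ : j₂ ≤ j₁)
    (H₁ : DiscreteFrechetLE w p u v i₁ j₁ r)
    (H₂ : DiscreteFrechetLE w p u v i₂ j₂ r) :
    DiscreteFrechetLE w p u v i₁ j₂ r := by
  classical
  obtain ⟨K₁, σ₁, hc₁, hd₁⟩ := H₁
  obtain ⟨K₂, σ₂, hc₂, hd₂⟩ := H₂
  -- basic monotonicity facts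
  have step₁ := fun {k} (hk : k < K₁) => DFAux.coupling_step hc₁ hk
  have step₂ := fun {k} (hk : k < K₂) => DFAux.coupling_step hc₂ hk
  have mono₁₁ : ∀ {k l}, k ≤ l → l ≤ K₁ → (σ₁ k).1 ≤ (σ₁ l).1 :=
    fun hkl hlK => DFAux.mono_of_step (f := fun k => (σ₁ k).1)
      (fun k hk => (step₁ hk).1) hkl hlK
  have mono₁₂ : ∀ {k l}, k ≤ l → l ≤ K₁ → (σ₁ k).2 ≤ (σ₁ l).2 :=
    fun hkl hlK => DFAux.mono_of_step (f := fun k => (σ₁ k).2)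
      (fun k hk => (step₁ hk).2.2.1) hkl hlK
  have mono₂₁ : ∀ {k l}, k ≤ l → l ≤ K₂ → (σ₂ k).1 ≤ (σ₂ l).1 :=
    fun hkl hlK => DFAux.mono_of_step (f := fun k => (σ₂ k).1)
      (fun k hk => (step₂ hk).1) hkl hlK
  have mono₂₂ : ∀ {k l}, k ≤ l → l ≤ K₂ → (σ₂ k).2 ≤ (σ₂ l).2 :=
    fun hkl hlK => DFAux.mono_of_step (f := fun k => (σ₂ k).2)
      (fun k hk => (step₂ hk).2.2.1) hkl hlK
  have hσ₁0 : σ₁ 0 = (u, i₁) := hc₁.1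
  have hσ₁K : σ₁ K₁ = (v, j₁) := hc₁.2.1
  have hσ₂0 : σ₂ 0 = (u, i₂) := hc₂.1
  have hσ₂K : σ₂ K₂ = (v, j₂) := hc₂.2.1
  -- bounds on first coordinate of σ₁
  have hbd₁ : ∀ k ≤ K₁, u ≤ (σ₁ k).1 ∧ (σ₁ k).1 ≤ v := by
    intro k hk
    constructor
    · have := mono₁₁ (Nat.zero_le k) hk; rw [hσ₁0] at this; exact this
    · have := mono₁₁ hk (le_refl K₁); rw [hσ₁K] at this; exact this
  -- for every t in [u,v] there is an index of σ₂ in column t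
  have hcol : ∀ t, u ≤ t → t ≤ v → ∃ m ≤ K₂, (σ₂ m).1 = t := by
    intro t hut htv
    apply DFAux.exists_eq_of_step (f := fun m => (σ₂ m).1) (K := K₂)
      (fun k hk => (step₂ hk).2.1)
    · rw [hσ₂0]; exact hut
    · rw [hσ₂K]; exact htv
  -- D t : the lowest second coordinate of σ₂ in column t
  set D : ℕ → ℕ := fun t => sInf {y | ∃ m ≤ K₂, σ₂ m = (t, y)} with hDdef
  have hDmem : ∀ t, u ≤ t → t ≤ v → ∃ m ≤ K₂, σ₂ m = (t, D t) := by
    intro t hut htv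
    obtain ⟨m, hm, hmt⟩ := hcol t hut htv
    have hne : {y | ∃ m ≤ K₂, σ₂ m = (t, y)}.Nonempty :=
      ⟨(σ₂ m).2, m, hm, by rw [← hmt]⟩
    exact Nat.sInf_mem hne
  have hDle : ∀ t m, m ≤ K₂ → (σ₂ m).1 = t → D t ≤ (σ₂ m).2 := by
    intro t m hm hmt
    exact Nat.sInf_le ⟨m, hm, by rw [← hmt]⟩
  -- D is monotone on adjacent columns in [u,v]
  have hDmono : ∀ t, u ≤ t → t + 1 ≤ v → D t ≤ D (t+1) := by
    intro t hut htv
    obtain ⟨m', hm', hmt'⟩ := hDmem (t+1) (by omega) htv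
    obtain ⟨m, hm, hmt⟩ : ∃ m ≤ m', (σ₂ m).1 = t := by
      apply DFAux.exists_eq_of_step (f := fun m => (σ₂ m).1) (K := m')
        (fun k hk => (step₂ (by omega)).2.1)
      · rw [hσ₂0]; exact hut
      · rw [hmt']; omega
    calc D t ≤ (σ₂ m).2 := hDle t m (le_trans hm hm') hmt
      _ ≤ (σ₂ m').2 := mono₂₂ hm hm'
      _ = D (t+1) := by rw [hmt']
  have hDv : D v ≤ j₂ := by
    have := hDle v K₂ (le_refl _) (by rw [hσ₂K])
    rw [hσ₂K] at this; exact this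
  have hDu : i₂ ≤ D u := by
    obtain ⟨m, hm, hmt⟩ := hDmem u (le_refl u) huv
    have := mono₂₂ (Nat.zero_le m) hm
    rw [hσ₂0, hmt] at this; exact this
  -- first index where σ₁ rises to meet D
  have hex : ∃ k, k ≤ K₁ ∧ D ((σ₁ k).1) ≤ (σ₁ k).2 := by
    refine ⟨K₁, le_refl _, ?_⟩
    rw [hσ₁K]; simp only
    omega
  obtain ⟨k₀, ⟨hk₀K, hk₀D⟩, hk₀min⟩ :
      ∃ k, (k ≤ K₁ ∧ D ((σ₁ k).1) ≤ (σ₁ k).2) ∧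
        ∀ j < k, ¬(j ≤ K₁ ∧ D ((σ₁ j).1) ≤ (σ₁ j).2) :=
    ⟨Nat.find hex, Nat.find_spec hex, fun j hj => Nat.find_min hex hj⟩
  -- get the glue point
  suffices hglue : ∃ m ≤ K₂, σ₁ k₀ = σ₂ m by
    obtain ⟨m, hm, heq⟩ := hglue
    exact DFAux.glue w p hc₁ hc₂ hd₁ hd₂ hk₀K hm heq
  rcases Nat.eq_zero_or_pos k₀ with h0 | hpos
  · -- k₀ = 0: i₁ = i₂ = D u and σ₂ starts there
    rw [h0] at hk₀D
    rw [hσ₁0] at hk₀D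
    simp only at hk₀D
    have : D u = i₁ := by
      obtain ⟨m, hm, hmt⟩ := hDmem u (le_refl u) huv
      omega
    refine ⟨0, Nat.zero_le _, ?_⟩
    rw [h0, hσ₁0, hσ₂0]
    have hii : i₁ = i₂ := by omega
    rw [hii]
  · have hprev := hk₀min (k₀ - 1) (by omega)
    push_neg at hprev
    have hlt : (σ₁ (k₀-1)).2 < D ((σ₁ (k₀-1)).1) := hprev (by omega)
    set a := (σ₁ (k₀-1)).1 with ha
    set b := (σ₁ (k₀-1)).2 with hb
    have he : k₀ - 1 + 1 = k₀ := by omega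
    have hav : u ≤ a ∧ a ≤ v := hbd₁ (k₀-1) (by omega)
    have hstep := hc₁.2.2 (k₀-1) (by omega)
    rw [he, ← ha, ← hb] at hstep
    have hk₀v : (σ₁ k₀).1 ≤ v := (hbd₁ k₀ hk₀K).2
    rcases hstep with h' | h' | h'
    · -- horizontal step: contradiction
      exfalso
      rw [h'] at hk₀D
      simp only at hk₀D
      have : a + 1 ≤ v := by rw [h'] at hk₀v; simpa using hk₀v
      have := hDmono a hav.1 this
      omega
    · -- vertical step: σ₁ k₀ = (a, D a)
      rw [h'] at hk₀D
      simp only at hk₀D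
      have hDa : D a = b + 1 := by omega
      obtain ⟨m, hm, hmt⟩ := hDmem a hav.1 hav.2
      exact ⟨m, hm, by rw [h', hmt, hDa]⟩
    · -- diagonal step: σ₁ k₀ = (a+1, D (a+1))
      rw [h'] at hk₀D
      simp only at hk₀D
      have hv : a + 1 ≤ v := by rw [h'] at hk₀v; simpa using hk₀v
      have hmono := hDmono a hav.1 hv
      have hDa : D (a+1) = b + 1 := by omega
      obtain ⟨m, hm, hmt⟩ := hDmem (a+1) (by omega) hv
      exact ⟨m, hm, by rw [h', hmt, hDa]⟩
end

section
/- Let E be a Euclidean space, let f, g : ℝ → E be continuous, and let r ≥ 0. Let a ≤ s ≤ b and c ≤ t ≤ d be real numbers. If the Fréchet distance of f on [a,s] and g on [c,t] is at most r, and the Fréchet distance of f on [s,b] and g on [t,d] is at most r, then the Fréchet distance of f on [a,b] and g on [c,d] is at most r. -/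
private noncomputable def clampI (u : ℝ) : ℝ := min 1 (max 0 u)

private lemma clampI_mem (u : ℝ) : clampI u ∈ Set.Icc (0:ℝ) 1 := by
  unfold clampI
  constructor
  · exact le_min zero_le_one (le_max_left 0 u)
  · exact min_le_left 1 _

private lemma clampI_mono : Monotone clampI := fun u v h =>
  min_le_min le_rfl (max_le_max le_rfl h)

private lemma clampI_continuous : Continuous clampI :=
  continuous_const.min (continuous_const.max continuous_id)

private lemma clampI_of_mem {u : ℝ} (hu : u ∈ Set.Icc (0:ℝ) 1) : clampI u = u := by
  unfold clampI
  rw [max_eq_right hu.1, min_eq_right hu.2]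

/-- extend a function on [0,1] to ℝ by clamping -/
private noncomputable def ext (p : ℝ → ℝ) (u : ℝ) : ℝ := p (clampI u)

private lemma ext_continuous {p : ℝ → ℝ} (hp : ContinuousOn p (Set.Icc 0 1)) :
    Continuous (ext p) :=
  hp.comp_continuous clampI_continuous clampI_mem

private lemma ext_monotone {p : ℝ → ℝ} (hp : MonotoneOn p (Set.Icc 0 1)) :
    Monotone (ext p) := fun u v h =>
  hp (clampI_mem u) (clampI_mem v) (clampI_mono h)

private lemma ext_of_mem (p : ℝ → ℝ) {u : ℝ} (hu : u ∈ Set.Icc (0:ℝ) 1) :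
    ext p u = p u := by rw [ext, clampI_of_mem hu]

/-- the glued reparameterization -/
private noncomputable def glue (p q : ℝ → ℝ) (u : ℝ) : ℝ :=
  if u ≤ 1/2 then ext p (2*u) else ext q (2*u - 1)

private lemma glue_continuous {p q : ℝ → ℝ} (hp : ContinuousOn p (Set.Icc 0 1))
    (hq : ContinuousOn q (Set.Icc 0 1)) (hpq : p 1 = q 0) :
    Continuous (glue p q) := by
  apply Continuous.if_le
  · exact (ext_continuous hp).comp (continuous_const.mul continuous_id)
  · exact (ext_continuous hq).comp ((continuous_const.mul continuous_id).sub continuous_const)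
  · exact continuous_id
  · exact continuous_const
  · intro x hx
    subst hx
    norm_num
    rw [ext_of_mem p (by norm_num), ext_of_mem q (by norm_num), hpq]

private lemma glue_monotone {p q : ℝ → ℝ} (hp : MonotoneOn p (Set.Icc 0 1))
    (hq : MonotoneOn q (Set.Icc 0 1)) (hpq : p 1 = q 0) :
    Monotone (glue p q) := by
  intro u v huv
  unfold glue
  by_cases hu : u ≤ 1/2 <;> by_cases hv : v ≤ 1/2 <;> simp only [hu, hv, if_true, if_false]
  · exact ext_monotone hp (by linarith)
  · calc ext p (2*u) ≤ ext p 1 := ext_monotone hp (by linarith)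
      _ = q 0 := by rw [ext_of_mem p (by norm_num), hpq]
      _ = ext q 0 := (ext_of_mem q (by norm_num)).symm
      _ ≤ ext q (2*v - 1) := ext_monotone hq (by linarith)
  · exact absurd (le_trans huv hv) hu
  · exact ext_monotone hq (by linarith)

theorem frechet_concat {n : ℕ} (f g : ℝ → EuclideanSpace ℝ (Fin n))
    (hf : Continuous f) (hg : Continuous g) (r : ℝ) (hr : 0 ≤ r)
    (a s b c t d : ℝ)
    (has : a ≤ s) (hsb : s ≤ b) (hct : c ≤ t) (htd : t ≤ d)
    (H₁ : FrechetLE f g a s c t r) (H₂ : FrechetLE f g s b t d r) :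
    FrechetLE f g a b c d r := by
  intro ε hε
  obtain ⟨φ₁, ψ₁, hφ₁c, hψ₁c, hφ₁m, hψ₁m, hφ₁0, hφ₁1, hψ₁0, hψ₁1, h₁⟩ := H₁ ε hε
  obtain ⟨φ₂, ψ₂, hφ₂c, hψ₂c, hφ₂m, hψ₂m, hφ₂0, hφ₂1, hψ₂0, hψ₂1, h₂⟩ := H₂ ε hε
  have hφjoin : φ₁ 1 = φ₂ 0 := by rw [hφ₁1, hφ₂0]
  have hψjoin : ψ₁ 1 = ψ₂ 0 := by rw [hψ₁1, hψ₂0]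
  refine ⟨glue φ₁ φ₂, glue ψ₁ ψ₂,
    (glue_continuous hφ₁c hφ₂c hφjoin).continuousOn,
    (glue_continuous hψ₁c hψ₂c hψjoin).continuousOn,
    (glue_monotone hφ₁m hφ₂m hφjoin).monotoneOn _,
    (glue_monotone hψ₁m hψ₂m hψjoin).monotoneOn _, ?_, ?_, ?_, ?_, ?_⟩
  · rw [glue, if_pos (by norm_num)]
    norm_num
    rw [ext_of_mem φ₁ (by norm_num), hφ₁0]
  · rw [glue, if_neg (by norm_num)]
    norm_num
    rw [ext_of_mem φ₂ (by norm_num), hφ₂1]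
  · rw [glue, if_pos (by norm_num)]
    norm_num
    rw [ext_of_mem ψ₁ (by norm_num), hψ₁0]
  · rw [glue, if_neg (by norm_num)]
    norm_num
    rw [ext_of_mem ψ₂ (by norm_num), hψ₂1]
  · intro u hu
    by_cases h : u ≤ 1/2
    · have hmem : 2*u ∈ Set.Icc (0:ℝ) 1 := ⟨by linarith [hu.1], by linarith⟩
      rw [glue, glue, if_pos h, if_pos h, ext_of_mem φ₁ hmem, ext_of_mem ψ₁ hmem]
      exact h₁ _ hmem
    · have hmem : 2*u - 1 ∈ Set.Icc (0:ℝ) 1 := ⟨by push_neg at h; linarith, by linarith [hu.2]⟩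
      rw [glue, glue, if_neg h, if_neg h, ext_of_mem φ₂ hmem, ext_of_mem ψ₂ hmem]
      exact h₂ _ hmem
end

section
/- Let E be a Euclidean space, let f, g : ℝ → E be continuous, and let r ≥ 0. Let a ≤ b and c ≤ d be real numbers and let s ∈ [a,b]. If the Fréchet distance of f on [a,b] and g on [c,d] is at most r, then there exists t ∈ [c,d] such that the Fréchet distance of f on [a,s] and g on [c,t] is at most r and the Fréchet distance of f on [s,b] and g on [t,d] is at most r. -/
set_option maxHeartbeats 1000000 in
theorem frechet_split {n : ℕ} (f g : ℝ → EuclideanSpace ℝ (Fin n))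
    (hf : Continuous f) (hg : Continuous g) (r : ℝ) (hr : 0 ≤ r)
    (a b c d s : ℝ) (hab : a ≤ b) (hcd : c ≤ d) (hs : s ∈ Set.Icc a b)
    (H : FrechetLE f g a b c d r) :
    ∃ t ∈ Set.Icc c d, FrechetLE f g a s c t r ∧ FrechetLE f g s b t d r := by
  classical
  -- extract a matching for each ε = 1/(k+1)
  choose φ ψ hφc hψc hφm hψm hφ0 hφ1 hψ0 hψ1 hdist using
    fun k : ℕ => H ((k + 1 : ℝ)⁻¹) (by positivity)
  -- find τ k with φ k (τ k) = s
  have hτex : ∀ k, ∃ x ∈ Set.Icc (0:ℝ) 1, φ k x = s := by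
    intro k
    have h1 := intermediate_value_Icc (zero_le_one) (hφc k)
    have h2 : s ∈ Set.Icc (φ k 0) (φ k 1) := by rw [hφ0 k, hφ1 k]; exact hs
    obtain ⟨x, hx, hxs⟩ := h1 h2
    exact ⟨x, hx, hxs⟩
  choose τ hτ hτs using hτex
  -- ψ maps [0,1] into [c,d]
  have hQcd : ∀ k, ∀ u ∈ Set.Icc (0:ℝ) 1, ψ k u ∈ Set.Icc c d := by
    intro k u hu
    constructor
    · calc c = ψ k 0 := (hψ0 k).symm
        _ ≤ ψ k u := hψm k ⟨le_refl 0, zero_le_one⟩ hu hu.1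
    · calc ψ k u ≤ ψ k 1 := hψm k hu ⟨zero_le_one, le_refl 1⟩ hu.2
        _ = d := hψ1 k
  -- convergent subsequence of t_k := ψ k (τ k)
  obtain ⟨t, htcd, κ, hκmono, hκtend⟩ :=
    isCompact_Icc.tendsto_subseq (fun k => hQcd k (τ k) (hτ k))
  -- selection lemma
  have hpick : ∀ δ > 0, ∀ ε' > 0, ∃ m : ℕ,
      |ψ m (τ m) - t| < δ ∧ ((m : ℝ) + 1)⁻¹ ≤ ε' := by
    intro δ hδ ε' hε'
    obtain ⟨N₁, hN₁⟩ := Metric.tendsto_atTop.mp hκtend δ hδ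
    obtain ⟨N₂, hN₂⟩ := exists_nat_gt (1 / ε')
    refine ⟨κ (max N₁ N₂), ?_, ?_⟩
    · have := hN₁ (max N₁ N₂) (le_max_left _ _)
      simpa [Real.dist_eq] using this
    · have h1 : (N₂ : ℝ) ≤ (κ (max N₁ N₂) : ℝ) := by
        exact_mod_cast le_trans (le_max_right N₁ N₂) (hκmono.le_apply)
      rw [inv_eq_one_div, div_le_iff₀ (by positivity)]
      have h2 : (1 : ℝ) / ε' < (κ (max N₁ N₂) : ℝ) + 1 := by linarith
      calc (1 : ℝ) = ε' * (1 / ε') := by field_simp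
        _ ≤ ε' * ((κ (max N₁ N₂) : ℝ) + 1) := by nlinarith
  -- uniform continuity of g on [c,d]
  have hgu : ∀ ε > 0, ∃ δ > 0, ∀ x ∈ Set.Icc c d, ∀ y ∈ Set.Icc c d,
      |x - y| < δ → dist (g x) (g y) < ε := by
    have huc : UniformContinuousOn g (Set.Icc c d) :=
      (isCompact_Icc : IsCompact (Set.Icc c d)).uniformContinuousOn_of_continuous
        hg.continuousOn
    have h := Metric.uniformContinuousOn_iff.mp huc
    intro ε hε
    obtain ⟨δ, hδ, hh⟩ := h ε hε
    exact ⟨δ, hδ, fun x hx y hy hxy => hh x hx y hy (by rwa [Real.dist_eq])⟩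
  refine ⟨t, htcd, ?_, ?_⟩
  · -- first half: f on [a,s], g on [c,t]
    intro ε hε
    obtain ⟨δ, hδ, hgδ⟩ := hgu (ε / 2) (by linarith)
    obtain ⟨m, hm1, hm2⟩ := hpick δ hδ (ε / 2) (by linarith)
    set σ := τ m with hσdef
    have hσ : σ ∈ Set.Icc (0:ℝ) 1 := hτ m
    set tn := ψ m σ with htndef
    have htn : tn ∈ Set.Icc c d := hQcd m σ hσ
    have hmin_le : min t tn ≤ t := min_le_left _ _
    have hargmem : ∀ u ∈ Set.Icc (0:ℝ) 1, σ * min (2 * u) 1 ∈ Set.Icc (0:ℝ) 1 := by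
      intro u hu
      have h1 : 0 ≤ min (2 * u) 1 := le_min (by linarith [hu.1]) zero_le_one
      have h2 : min (2 * u) 1 ≤ 1 := min_le_right _ _
      exact ⟨mul_nonneg hσ.1 h1, by nlinarith [hσ.1, hσ.2]⟩
    have hinnercont : Continuous fun u : ℝ => σ * min (2 * u) 1 := by fun_prop
    refine ⟨fun u => φ m (σ * min (2 * u) 1),
      fun u => min t (ψ m (σ * min (2 * u) 1)) + max 0 (2 * u - 1) * (t - min t tn),
      ?_, ?_, ?_, ?_, ?_, ?_, ?_, ?_, ?_⟩
    · exact (hφc m).comp hinnercont.continuousOn hargmem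
    · refine ContinuousOn.add (continuousOn_const.inf
        ((hψc m).comp hinnercont.continuousOn hargmem)) ?_
      exact (Continuous.continuousOn (by fun_prop))
    · intro u hu v hv huv
      exact hφm m (hargmem u hu) (hargmem v hv)
        (mul_le_mul_of_nonneg_left (min_le_min (by linarith) le_rfl) hσ.1)
    · intro u hu v hv huv
      have h1 : min t (ψ m (σ * min (2 * u) 1)) ≤ min t (ψ m (σ * min (2 * v) 1)) :=
        min_le_min le_rfl (hψm m (hargmem u hu) (hargmem v hv)
          (mul_le_mul_of_nonneg_left (min_le_min (by linarith) le_rfl) hσ.1))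
      have h2 : max 0 (2 * u - 1) ≤ max 0 (2 * v - 1) := max_le_max le_rfl (by linarith)
      have h3 : (0:ℝ) ≤ t - min t tn := by linarith
      exact add_le_add h1 (mul_le_mul_of_nonneg_right h2 h3)
    · show φ m (σ * min (2 * (0:ℝ)) 1) = a
      have : σ * min (2 * (0:ℝ)) 1 = 0 := by norm_num
      simp only [this, hφ0 m]
    · show φ m (σ * min (2 * (1:ℝ)) 1) = s
      have : σ * min (2 * (1:ℝ)) 1 = σ := by norm_num
      rw [this]; exact hτs m
    · beta_reduce
      have h0 : σ * min (2 * (0:ℝ)) 1 = 0 := by norm_num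
      have h1 : max (0:ℝ) (2 * 0 - 1) = 0 := by norm_num
      rw [h0, h1, hψ0 m, min_eq_right htcd.1]; ring
    · beta_reduce
      have h0 : σ * min (2 * (1:ℝ)) 1 = σ := by norm_num
      have h1 : max (0:ℝ) (2 * 1 - 1) = 1 := by norm_num
      rw [h0, h1, ← htndef]; ring
    · intro u hu
      beta_reduce
      set v := σ * min (2 * u) 1 with hvdef
      have hvmem : v ∈ Set.Icc (0:ℝ) 1 := hargmem u hu
      have hvσ : v ≤ σ := by
        have : min (2 * u) 1 ≤ 1 := min_le_right _ _
        nlinarith [hσ.1]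
      have hQv_le : ψ m v ≤ tn := hψm m hvmem hσ hvσ
      have hQvcd : ψ m v ∈ Set.Icc c d := hQcd m v hvmem
      have hbase : dist (f (φ m v)) (g (ψ m v)) ≤ r + ((m:ℝ)+1)⁻¹ := hdist m v hvmem
      have hbase' : dist (f (φ m v)) (g (ψ m v)) ≤ r + ε / 2 := le_trans hbase (by linarith)
      have htnt : |tn - t| < δ := hm1
      rcases le_or_gt (2 * u) 1 with h2u | h2u
      · -- first stage
        have hmax0 : max (0:ℝ) (2 * u - 1) = 0 := max_eq_left (by linarith)
        rw [hmax0, zero_mul, add_zero]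
        rcases le_total (ψ m v) t with hc | hc
        · rw [min_eq_right hc]; linarith
        · rw [min_eq_left hc]
          have hnear : dist (g (ψ m v)) (g t) < ε / 2 := by
            apply hgδ _ hQvcd _ htcd
            rw [abs_sub_comm] at htnt
            rw [abs_of_nonneg (by linarith)]
            calc ψ m v - t ≤ tn - t := by linarith
              _ ≤ |t - tn| := by rw [abs_sub_comm]; exact le_abs_self _
              _ < δ := by rwa [abs_sub_comm]
          calc dist (f (φ m v)) (g t)
              ≤ dist (f (φ m v)) (g (ψ m v)) + dist (g (ψ m v)) (g t) := dist_triangle _ _ _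
            _ ≤ r + ε / 2 + ε / 2 := by linarith
            _ = r + ε := by ring
      · -- second stage
        have hv' : v = σ := by
          rw [hvdef, min_eq_right h2u.le, mul_one]
        set x := min t tn + max 0 (2 * u - 1) * (t - min t tn) with hxdef
        have hmaxmem : (0:ℝ) ≤ max 0 (2 * u - 1) ∧ max 0 (2 * u - 1) ≤ 1 := by
          constructor
          · exact le_max_left _ _
          · apply max_le (by norm_num) (by linarith [hu.2])
        have hx1 : min t tn ≤ x := by nlinarith [hmaxmem.1, hmaxmem.2]
        have hx2 : x ≤ t := by nlinarith [hmaxmem.1, hmaxmem.2]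
        have habs : |x - tn| ≤ |t - tn| := by
          rcases le_total t tn with h | h
          · have h1 : min t tn = t := min_eq_left h
            rw [h1] at hx1
            have hxt : x = t := le_antisymm hx2 hx1
            rw [hxt]
          · have h1 : min t tn = tn := min_eq_right h
            rw [h1] at hx1
            rw [abs_of_nonneg (by linarith), abs_of_nonneg (by linarith)]
            linarith
        have hxcd : x ∈ Set.Icc c d := by
          constructor
          · calc c ≤ min t tn := le_min htcd.1 htn.1
              _ ≤ x := hx1
          · exact le_trans hx2 htcd.2
        have hnear : dist (g tn) (g x) < ε / 2 := by
          apply hgδ _ htn _ hxcd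
          rw [abs_sub_comm]
          calc |x - tn| ≤ |t - tn| := habs
            _ = |tn - t| := abs_sub_comm _ _
            _ < δ := htnt
        have hQv : ψ m v = tn := by rw [hv']
        have hminQ : min t (ψ m v) = min t tn := by rw [hQv]
        rw [hminQ]
        calc dist (f (φ m v)) (g x)
            ≤ dist (f (φ m v)) (g (ψ m v)) + dist (g (ψ m v)) (g x) := dist_triangle _ _ _
          _ = dist (f (φ m v)) (g (ψ m v)) + dist (g tn) (g x) := by rw [hQv]
          _ ≤ r + ε / 2 + ε / 2 := by linarith
          _ = r + ε := by ring
  · -- second half: f on [s,b], g on [t,d]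
    intro ε hε
    obtain ⟨δ, hδ, hgδ⟩ := hgu (ε / 2) (by linarith)
    obtain ⟨m, hm1, hm2⟩ := hpick δ hδ (ε / 2) (by linarith)
    set σ := τ m with hσdef
    have hσ : σ ∈ Set.Icc (0:ℝ) 1 := hτ m
    set tn := ψ m σ with htndef
    have htn : tn ∈ Set.Icc c d := hQcd m σ hσ
    have hmax_ge : t ≤ max t tn := le_max_left _ _
    have hargmem : ∀ u ∈ Set.Icc (0:ℝ) 1,
        σ + (1 - σ) * max 0 (2 * u - 1) ∈ Set.Icc (0:ℝ) 1 := by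
      intro u hu
      have h1 : (0:ℝ) ≤ max 0 (2 * u - 1) := le_max_left _ _
      have h2 : max 0 (2 * u - 1) ≤ 1 := max_le (by norm_num) (by linarith [hu.2])
      constructor
      · nlinarith [hσ.1, hσ.2]
      · nlinarith [hσ.1, hσ.2]
    have hargge : ∀ u ∈ Set.Icc (0:ℝ) 1, σ ≤ σ + (1 - σ) * max 0 (2 * u - 1) := by
      intro u hu
      have h1 : (0:ℝ) ≤ max 0 (2 * u - 1) := le_max_left _ _
      nlinarith [hσ.2]
    have hinnercont : Continuous fun u : ℝ => σ + (1 - σ) * max 0 (2 * u - 1) := by fun_prop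
    refine ⟨fun u => φ m (σ + (1 - σ) * max 0 (2 * u - 1)),
      fun u => max t (ψ m (σ + (1 - σ) * max 0 (2 * u - 1)))
        + (min (2 * u) 1 - 1) * (max t tn - t),
      ?_, ?_, ?_, ?_, ?_, ?_, ?_, ?_, ?_⟩
    · exact (hφc m).comp hinnercont.continuousOn hargmem
    · refine ContinuousOn.add (continuousOn_const.sup
        ((hψc m).comp hinnercont.continuousOn hargmem)) ?_
      exact (Continuous.continuousOn (by fun_prop))
    · intro u hu v hv huv
      have harg : σ + (1 - σ) * max 0 (2 * u - 1) ≤ σ + (1 - σ) * max 0 (2 * v - 1) := by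
        have := max_le_max (le_refl (0:ℝ)) (by linarith : 2 * u - 1 ≤ 2 * v - 1)
        nlinarith [hσ.2]
      exact hφm m (hargmem u hu) (hargmem v hv) harg
    · intro u hu v hv huv
      have harg : σ + (1 - σ) * max 0 (2 * u - 1) ≤ σ + (1 - σ) * max 0 (2 * v - 1) := by
        have := max_le_max (le_refl (0:ℝ)) (by linarith : 2 * u - 1 ≤ 2 * v - 1)
        nlinarith [hσ.2]
      have h1 : max t (ψ m (σ + (1 - σ) * max 0 (2 * u - 1)))
          ≤ max t (ψ m (σ + (1 - σ) * max 0 (2 * v - 1))) :=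
        max_le_max le_rfl (hψm m (hargmem u hu) (hargmem v hv) harg)
      have h2 : min (2 * u) 1 - 1 ≤ min (2 * v) 1 - 1 := by
        have := min_le_min (by linarith : 2 * u ≤ 2 * v) (le_refl (1:ℝ))
        linarith
      have h3 : (0:ℝ) ≤ max t tn - t := by linarith
      exact add_le_add h1 (mul_le_mul_of_nonneg_right h2 h3)
    · show φ m (σ + (1 - σ) * max 0 (2 * (0:ℝ) - 1)) = s
      have h0 : σ + (1 - σ) * max 0 (2 * (0:ℝ) - 1) = σ := by norm_num
      rw [h0]; exact hτs m
    · show φ m (σ + (1 - σ) * max 0 (2 * (1:ℝ) - 1)) = b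
      have h0 : σ + (1 - σ) * max 0 (2 * (1:ℝ) - 1) = 1 := by norm_num
      rw [h0]; exact hφ1 m
    · beta_reduce
      have h0 : σ + (1 - σ) * max 0 (2 * (0:ℝ) - 1) = σ := by norm_num
      have h1 : min (2 * (0:ℝ)) 1 = 0 := by norm_num
      rw [h0, h1, ← htndef]; ring
    · beta_reduce
      have h0 : σ + (1 - σ) * max 0 (2 * (1:ℝ) - 1) = 1 := by norm_num
      have h1 : min (2 * (1:ℝ)) 1 = 1 := by norm_num
      rw [h0, h1, hψ1 m, max_eq_right htcd.2]; ring
    · intro u hu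
      beta_reduce
      set w := σ + (1 - σ) * max 0 (2 * u - 1) with hwdef
      have hwmem : w ∈ Set.Icc (0:ℝ) 1 := hargmem u hu
      have hwσ : σ ≤ w := hargge u hu
      have hQw_ge : tn ≤ ψ m w := hψm m hσ hwmem hwσ
      have hQwcd : ψ m w ∈ Set.Icc c d := hQcd m w hwmem
      have hbase : dist (f (φ m w)) (g (ψ m w)) ≤ r + ((m:ℝ)+1)⁻¹ := hdist m w hwmem
      have hbase' : dist (f (φ m w)) (g (ψ m w)) ≤ r + ε / 2 := le_trans hbase (by linarith)
      have htnt : |tn - t| < δ := hm1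
      rcases le_or_gt 1 (2 * u) with h2u | h2u
      · -- second stage: correction term zero
        have hmin1 : min (2 * u) 1 = 1 := min_eq_right h2u
        rw [hmin1]
        rw [show ((1:ℝ) - 1) * (max t tn - t) = 0 by ring, add_zero]
        rcases le_total t (ψ m w) with hc | hc
        · rw [max_eq_right hc]; linarith
        · rw [max_eq_left hc]
          have hnear : dist (g (ψ m w)) (g t) < ε / 2 := by
            apply hgδ _ hQwcd _ htcd
            rw [abs_of_nonpos (by linarith)]
            calc -(ψ m w - t) = t - ψ m w := by ring
              _ ≤ t - tn := by linarith
              _ ≤ |tn - t| := by rw [abs_sub_comm]; exact le_abs_self _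
              _ < δ := htnt
          calc dist (f (φ m w)) (g t)
              ≤ dist (f (φ m w)) (g (ψ m w)) + dist (g (ψ m w)) (g t) := dist_triangle _ _ _
            _ ≤ r + ε / 2 + ε / 2 := by linarith
            _ = r + ε := by ring
      · -- first stage: w = σ, moving along g between t and max t tn
        have hmax0 : max (0:ℝ) (2 * u - 1) = 0 := max_eq_left (by linarith)
        have hw' : w = σ := by rw [hwdef, hmax0, mul_zero, add_zero]
        set x := max t tn + (min (2 * u) 1 - 1) * (max t tn - t) with hxdef
        have hminmem : (0:ℝ) ≤ min (2 * u) 1 ∧ min (2 * u) 1 ≤ 1 := by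
          constructor
          · exact le_min (by linarith [hu.1]) zero_le_one
          · exact min_le_right _ _
        have hmtn : t ≤ max t tn := le_max_left _ _
        have hx1 : t ≤ x := by nlinarith [hminmem.1, hminmem.2]
        have hx2 : x ≤ max t tn := by nlinarith [hminmem.1, hminmem.2]
        have habs : |x - tn| ≤ |t - tn| := by
          rcases le_total tn t with h | h
          · have h1 : max t tn = t := max_eq_left h
            rw [h1] at hx2
            have hxt : x = t := le_antisymm hx2 hx1
            rw [hxt]
          · have h1 : max t tn = tn := max_eq_right h
            rw [h1] at hx2
            rw [abs_of_nonpos (by linarith), abs_of_nonpos (by linarith)]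
            linarith
        have hxcd : x ∈ Set.Icc c d := by
          constructor
          · exact le_trans htcd.1 hx1
          · calc x ≤ max t tn := hx2
              _ ≤ d := max_le htcd.2 htn.2
        have hnear : dist (g tn) (g x) < ε / 2 := by
          apply hgδ _ htn _ hxcd
          rw [abs_sub_comm]
          calc |x - tn| ≤ |t - tn| := habs
            _ = |tn - t| := abs_sub_comm _ _
            _ < δ := htnt
        have hQw : ψ m w = tn := by rw [hw']
        have hmaxQ : max t (ψ m w) = max t tn := by rw [hQw]
        rw [hmaxQ]
        calc dist (f (φ m w)) (g x)
            ≤ dist (f (φ m w)) (g (ψ m w)) + dist (g (ψ m w)) (g x) := dist_triangle _ _ _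
          _ = dist (f (φ m w)) (g (ψ m w)) + dist (g tn) (g x) := by rw [hQw]
          _ ≤ r + ε / 2 + ε / 2 := by linarith
          _ = r + ε := by ring
end

section
/- Let E be a Euclidean space, let f, g : ℝ → E be continuous, and let r ≥ 0. Let a ≤ x ≤ y ≤ b and c ≤ d be real numbers. If the Fréchet distance of f on [a,b] and g on [c,d] is at most r, then there exist real numbers u, v with c ≤ u ≤ v ≤ d such that the Fréchet distance of f on [x,y] and g on [u,v] is at most r. -/
namespace FrechetAux

open Set

variable {E : Type*} [PseudoMetricSpace E]

/-- One fixed reparameterization pair realizing bound `ρ`. -/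
def Reparam (f g : ℝ → E) (a b c d ρ : ℝ) : Prop :=
  ∃ φ ψ : ℝ → ℝ,
    ContinuousOn φ (Set.Icc 0 1) ∧ ContinuousOn ψ (Set.Icc 0 1) ∧
    MonotoneOn φ (Set.Icc 0 1) ∧ MonotoneOn ψ (Set.Icc 0 1) ∧
    φ 0 = a ∧ φ 1 = b ∧ ψ 0 = c ∧ ψ 1 = d ∧
    ∀ t ∈ Set.Icc (0:ℝ) 1, dist (f (φ t)) (g (ψ t)) ≤ ρ

theorem Reparam.mono {f g : ℝ → E} {a b c d ρ ρ' : ℝ}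
    (h : Reparam f g a b c d ρ) (hρ : ρ ≤ ρ') : Reparam f g a b c d ρ' := by
  obtain ⟨φ, ψ, h1, h2, h3, h4, h5, h6, h7, h8, h9⟩ := h
  exact ⟨φ, ψ, h1, h2, h3, h4, h5, h6, h7, h8, fun t ht => (h9 t ht).trans hρ⟩

lemma glue_mono {A B : ℝ → ℝ} {p : ℝ} (hA : Monotone A) (hB : Monotone B)
    (h : A p ≤ B p) : Monotone (fun t => if t ≤ p then A t else B t) := by
  intro s t hst
  dsimp only
  by_cases hs : s ≤ p <;> by_cases ht : t ≤ p <;> simp only [hs, ht, if_true, if_false]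
  · exact hA hst
  · exact (hA hs).trans (h.trans (hB (le_of_not_ge ht)))
  · exact absurd (hst.trans ht) hs
  · exact hB hst

lemma glue_cont {A B : ℝ → ℝ} {p : ℝ} (hA : Continuous A) (hB : Continuous B)
    (h : A p = B p) : Continuous (fun t => if t ≤ p then A t else B t) :=
  Continuous.if_le hA hB continuous_id continuous_const (fun x hx => by subst hx; exact h)

/-- time-warp for the middle third -/
noncomputable def θ (t : ℝ) : ℝ := min 1 (max 0 (3 * t - 1))

lemma θ_mono : Monotone θ := fun s t h =>
  min_le_min le_rfl (max_le_max le_rfl (by linarith))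

lemma θ_cont : Continuous θ :=
  continuous_const.min (continuous_const.max (by fun_prop))

lemma θ_mem (t : ℝ) : θ t ∈ Icc (0:ℝ) 1 :=
  ⟨le_min zero_le_one (le_max_left _ _), min_le_left _ _⟩

lemma θ_of_le {t : ℝ} (h : t ≤ 1/3) : θ t = 0 := by
  unfold θ
  rw [max_eq_left (by linarith), min_eq_right zero_le_one]

lemma θ_of_ge {t : ℝ} (h : 2/3 ≤ t) : θ t = 1 := by
  unfold θ
  rw [max_eq_right (by linarith), min_eq_left (by linarith)]

lemma θ_of_mid {t : ℝ} (h1 : 1/3 ≤ t) (h2 : t ≤ 2/3) : θ t = 3 * t - 1 := by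
  unfold θ
  rw [max_eq_right (by linarith), min_eq_right (by linarith)]

/-- Transfer lemma: perturb the right-curve endpoints by at most `δ`,
paying the oscillation `ε₂` of `g` at scale `δ` on `[c,d]`. -/
theorem reparam_perturb {f g : ℝ → E} {x y c d u v u' v' ρ δ ε₂ : ℝ}
    (hosc : ∀ s ∈ Icc c d, ∀ s' ∈ Icc c d, |s - s'| ≤ δ → dist (g s) (g s') ≤ ε₂)
    (hcu' : c ≤ u') (hu'v' : u' ≤ v') (hv'd : v' ≤ d)
    (hcu : c ≤ u) (huv : u ≤ v) (hvd : v ≤ d)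
    (hδu : |u - u'| ≤ δ) (hδv : |v - v'| ≤ δ)
    (h : Reparam f g x y u' v' ρ) : Reparam f g x y u v (ρ + ε₂) := by
  obtain ⟨φ, ψ, hφc, hψc, hφm, hψm, hφ0, hφ1, hψ0, hψ1, hd⟩ := h
  have hδ0 : 0 ≤ δ := le_trans (abs_nonneg _) hδu
  set q0 : ℝ := min v (max u u') with hq0
  set q1 : ℝ := min v (max u v') with hq1
  have huq0 : u ≤ q0 := le_min huv (le_max_left _ _)
  have hq0v : q0 ≤ v := min_le_left _ _
  have huq1 : u ≤ q1 := le_min huv (le_max_left _ _)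
  have hq1v : q1 ≤ v := min_le_left _ _
  -- the three pieces
  set A : ℝ → ℝ := fun t => u + 3 * t * (q0 - u) with hA
  set B : ℝ → ℝ := fun t => min v (max u (ψ (θ t))) with hB
  set C : ℝ → ℝ := fun t => q1 + (3 * t - 2) * (v - q1) with hC
  have hψθ : ∀ t, ψ (θ t) ∈ Icc u' v' := by
    intro t
    constructor
    · rw [← hψ0]; exact hψm (left_mem_Icc.2 zero_le_one) (θ_mem t) (θ_mem t).1
    · rw [← hψ1]; exact hψm (θ_mem t) (right_mem_Icc.2 zero_le_one) (θ_mem t).2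
  have hA13 : A (1/3) = q0 := by simp only [hA]; ring
  have hB13 : B (1/3) = q0 := by
    simp only [hB, θ_of_le (le_refl (1/3 : ℝ)), hψ0, hq0]
  have hB23 : B (2/3) = q1 := by
    simp only [hB, θ_of_ge (le_refl (2/3 : ℝ)), hψ1, hq1]
  have hC23 : C (2/3) = q1 := by simp only [hC]; ring
  have hAm : Monotone A := by
    intro s t h
    simp only [hA]
    have := mul_nonneg (sub_nonneg.2 h) (sub_nonneg.2 huq0)
    linarith only [this]
  have hBm : Monotone B := by
    intro s t h
    exact min_le_min le_rfl (max_le_max le_rfl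
      (hψm (θ_mem s) (θ_mem t) (θ_mono h)))
  have hCm : Monotone C := by
    intro s t h
    simp only [hC]
    have := mul_nonneg (sub_nonneg.2 h) (sub_nonneg.2 hq1v)
    linarith only [this]
  have hAc : Continuous A := by fun_prop
  have hBc : Continuous B := by
    apply Continuous.min continuous_const
    apply Continuous.max continuous_const
    exact hψc.comp_continuous θ_cont θ_mem
  have hCc : Continuous C := by fun_prop
  set ψ' : ℝ → ℝ :=
      fun t => if t ≤ 1/3 then A t else if t ≤ 2/3 then B t else C t with hψ'
  set φ' : ℝ → ℝ := fun t => φ (θ t) with hφ'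
  have hBCm : Monotone (fun t => if t ≤ 2/3 then B t else C t) :=
    glue_mono hBm hCm (by rw [hB23, hC23])
  have hmatch : A (1/3) = (fun t => if t ≤ 2/3 then B t else C t) (1/3) := by
    dsimp only
    rw [hA13, if_pos (by norm_num : (1:ℝ)/3 ≤ 2/3), hB13]
  have hψ'm : Monotone ψ' := glue_mono hAm hBCm (le_of_eq hmatch)
  have hψ'c : Continuous ψ' :=
    glue_cont hAc (glue_cont hBc hCc (hB23.trans hC23.symm)) hmatch
  have hφ'm : Monotone φ' := fun s t h => hφm (θ_mem s) (θ_mem t) (θ_mono h)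
  have hφ'c : Continuous φ' := hφc.comp_continuous θ_cont θ_mem
  clear_value q0 q1 A B C ψ' φ'
  refine ⟨φ', ψ', hφ'c.continuousOn, hψ'c.continuousOn,
    hφ'm.monotoneOn _, hψ'm.monotoneOn _, ?_, ?_, ?_, ?_, ?_⟩
  · simp only [hφ', θ_of_le (by norm_num : (0:ℝ) ≤ 1/3)]; exact hφ0
  · simp only [hφ', θ_of_ge (by norm_num : (2:ℝ)/3 ≤ 1)]; exact hφ1
  · simp only [hψ', hA]
    rw [if_pos (by norm_num : (0:ℝ) ≤ 1/3)]
    ring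
  · simp only [hψ', hC]
    rw [if_neg (by norm_num : ¬(1:ℝ) ≤ 1/3), if_neg (by norm_num : ¬(1:ℝ) ≤ 2/3)]
    ring
  · intro t ht
    by_cases h1 : t ≤ 1/3
    · -- first third: f at x, g ramps from u to q0
      have hθt : θ t = 0 := θ_of_le h1
      have hψ't : ψ' t = A t := by simp only [hψ']; rw [if_pos h1]
      have hφ't : φ' t = x := by simp only [hφ', hθt]; exact hφ0
      have hAt : A t ∈ Icc u q0 := by
        constructor
        · simp only [hA]
          have := mul_nonneg ht.1 (sub_nonneg.2 huq0)
          linarith only [this]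
        · simp only [hA]
          have := mul_nonneg (sub_nonneg.2 h1) (sub_nonneg.2 huq0)
          linarith only [this]
      have hclose : |A t - u'| ≤ δ := by
        rcases le_total u' u with hc | hc
        · have hq0u : q0 = u := by
            rw [hq0, max_eq_left hc, min_eq_right huv]
          rw [hq0u] at hAt
          have hAtu : A t = u := le_antisymm hAt.2 hAt.1
          rw [hAtu]
          exact hδu
        · have hq0u' : q0 ≤ u' := by
            rw [hq0]; exact min_le_of_right_le (max_le hc le_rfl)
          rw [abs_le] at hδu ⊢
          constructor
          · linarith [hAt.1]
          · linarith [hAt.2]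
      have hd0 := hd 0 (left_mem_Icc.2 zero_le_one)
      rw [hφ0, hψ0] at hd0
      have hg : dist (g u') (g (A t)) ≤ ε₂ := by
        have hm1 : u' ∈ Icc c d := ⟨hcu', hu'v'.trans hv'd⟩
        have hm2 : A t ∈ Icc c d :=
          ⟨hcu.trans hAt.1, (hAt.2.trans hq0v).trans hvd⟩
        exact hosc u' hm1 (A t) hm2 (by rwa [abs_sub_comm])
      calc dist (f (φ' t)) (g (ψ' t))
          = dist (f x) (g (A t)) := by rw [hφ't, hψ't]
        _ ≤ dist (f x) (g u') + dist (g u') (g (A t)) := dist_triangle _ _ _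
        _ ≤ ρ + ε₂ := add_le_add hd0 hg
    · by_cases h2 : t ≤ 2/3
      · -- middle third: clamp
        have hθt : θ t = 3 * t - 1 := θ_of_mid (le_of_not_ge h1) h2
        have hψ't : ψ' t = B t := by
          simp only [hψ']; rw [if_neg h1, if_pos h2]
        have hwI : ψ (θ t) ∈ Icc u' v' := hψθ t
        have hclamp : |B t - ψ (θ t)| ≤ δ := by
          simp only [hB]
          rcases le_total (ψ (θ t)) u with hc | hc
          · rw [max_eq_left hc, min_eq_right huv, abs_le]
            rw [abs_le] at hδu
            constructor
            · linarith [hwI.1]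
            · linarith [hwI.1]
          · rw [max_eq_right hc]
            rcases le_total (ψ (θ t)) v with hc2 | hc2
            · rw [min_eq_right hc2]; simpa using hδ0
            · rw [min_eq_left hc2, abs_le]
              rw [abs_le] at hδv
              constructor
              · linarith [hwI.2]
              · linarith [hwI.2]
        have hdm := hd (θ t) (θ_mem t)
        have hg : dist (g (ψ (θ t))) (g (B t)) ≤ ε₂ := by
          have hw1 : ψ (θ t) ∈ Icc c d := ⟨hcu'.trans hwI.1, hwI.2.trans hv'd⟩
          have hw2 : B t ∈ Icc c d := by
            simp only [hB]
            exact ⟨hcu.trans (le_min huv (le_max_left _ _)),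
              (min_le_left _ _).trans hvd⟩
          exact hosc _ hw1 (B t) hw2 (by rwa [abs_sub_comm])
        calc dist (f (φ' t)) (g (ψ' t))
            = dist (f (φ (θ t))) (g (B t)) := by rw [hψ't]; simp only [hφ']
          _ ≤ dist (f (φ (θ t))) (g (ψ (θ t))) + dist (g (ψ (θ t))) (g (B t)) :=
              dist_triangle _ _ _
          _ ≤ ρ + ε₂ := add_le_add hdm hg
      · -- last third: f at y, g ramps from q1 to v
        have hθt : θ t = 1 := θ_of_ge (le_of_not_ge h2)
        have hψ't : ψ' t = C t := by
          simp only [hψ']; rw [if_neg h1, if_neg h2]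
        have hφ't : φ' t = y := by simp only [hφ', hθt]; exact hφ1
        have h2' : 2/3 ≤ t := le_of_not_ge h2
        have hCt : C t ∈ Icc q1 v := by
          constructor
          · simp only [hC]
            have := mul_nonneg (by linarith only [h2'] : (0:ℝ) ≤ 3 * t - 2)
              (sub_nonneg.2 hq1v)
            linarith only [this]
          · simp only [hC]
            have := mul_nonneg (by linarith only [ht.2] : (0:ℝ) ≤ 1 - (3 * t - 2))
              (sub_nonneg.2 hq1v)
            linarith only [this]
        have hclose : |C t - v'| ≤ δ := by
          rcases le_total v v' with hc | hc
          · have hq1v' : q1 = v := by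
              rw [hq1, max_eq_right (huv.trans hc), min_eq_left hc]
            rw [hq1v'] at hCt
            have : C t = v := le_antisymm hCt.2 hCt.1
            rw [this]
            exact hδv
          · have hv'q1 : v' ≤ q1 := by
              rw [hq1]; exact le_min hc (le_max_right _ _)
            rw [abs_le] at hδv ⊢
            constructor
            · linarith [hCt.1]
            · linarith [hCt.2]
        have hd1 := hd 1 (right_mem_Icc.2 zero_le_one)
        rw [hφ1, hψ1] at hd1
        have hg : dist (g v') (g (C t)) ≤ ε₂ := by
          have hm1 : v' ∈ Icc c d := ⟨hcu'.trans hu'v', hv'd⟩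
          have hm2 : C t ∈ Icc c d :=
            ⟨hcu.trans (huq1.trans hCt.1), hCt.2.trans hvd⟩
          exact hosc v' hm1 (C t) hm2 (by rwa [abs_sub_comm])
        calc dist (f (φ' t)) (g (ψ' t))
            = dist (f y) (g (C t)) := by rw [hφ't, hψ't]
          _ ≤ dist (f y) (g v') + dist (g v') (g (C t)) := dist_triangle _ _ _
          _ ≤ ρ + ε₂ := add_le_add hd1 hg

/-- Restriction lemma: from a reparameterization of the whole curves, extract one
for `f` on `[x,y]` and `g` on some `[u,v] ⊆ [c,d]`. -/
theorem reparam_restrict {f g : ℝ → E} {a b c d x y ρ : ℝ}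
    (hax : a ≤ x) (hxy : x ≤ y) (hyb : y ≤ b)
    (h : Reparam f g a b c d ρ) :
    ∃ u v : ℝ, c ≤ u ∧ u ≤ v ∧ v ≤ d ∧ Reparam f g x y u v ρ := by
  obtain ⟨φ, ψ, hφc, hψc, hφm, hψm, hφ0, hφ1, hψ0, hψ1, hd⟩ := h
  have h01 : (0:ℝ) ≤ 1 := zero_le_one
  have hx' : x ∈ Icc (φ 0) (φ 1) := by rw [hφ0, hφ1]; exact ⟨hax, hxy.trans hyb⟩
  have hy' : y ∈ Icc (φ 0) (φ 1) := by rw [hφ0, hφ1]; exact ⟨hax.trans hxy, hyb⟩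
  obtain ⟨s0, hs0I, hs0⟩ := intermediate_value_Icc h01 hφc hx'
  obtain ⟨t0', ht0I', ht0'⟩ := intermediate_value_Icc h01 hφc hy'
  set t0 : ℝ := max s0 t0' with ht0def
  have hs0t0 : s0 ≤ t0 := le_max_left _ _
  have ht0I : t0 ∈ Icc (0:ℝ) 1 := by
    rcases max_cases s0 t0' with ⟨he, _⟩ | ⟨he, _⟩ <;> rw [ht0def, he]
    exacts [hs0I, ht0I']
  have hφt0 : φ t0 = y := by
    rcases le_total s0 t0' with hc | hc
    · rw [ht0def, max_eq_right hc]; exact ht0'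
    · rw [ht0def, max_eq_left hc]
      have := hφm ht0I' hs0I hc
      rw [ht0', hs0] at this
      rw [hs0]; linarith
  set θ2 : ℝ → ℝ := fun t => s0 + t * (t0 - s0) with hθ2
  have hθ2m : Monotone θ2 := by
    intro p q h
    simp only [hθ2]
    have := mul_nonneg (sub_nonneg.2 h) (sub_nonneg.2 hs0t0)
    linarith only [this]
  have hθ2c : Continuous θ2 := by fun_prop
  have hθ2mem : MapsTo θ2 (Icc 0 1) (Icc 0 1) := by
    intro t ht
    constructor
    · simp only [hθ2]
      have := mul_nonneg ht.1 (sub_nonneg.2 hs0t0)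
      linarith only [this, hs0I.1]
    · simp only [hθ2]
      have := mul_nonneg (sub_nonneg.2 ht.2) (sub_nonneg.2 hs0t0)
      linarith only [this, ht0I.2]
  have hθ20 : θ2 0 = s0 := by simp [hθ2]
  have hθ21 : θ2 1 = t0 := by simp [hθ2]
  refine ⟨ψ s0, ψ t0, ?_, ?_, ?_, φ ∘ θ2, ψ ∘ θ2, ?_, ?_, ?_, ?_, ?_, ?_, ?_, ?_, ?_⟩
  · rw [← hψ0]; exact hψm (left_mem_Icc.2 h01) hs0I hs0I.1
  · exact hψm hs0I ht0I hs0t0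
  · rw [← hψ1]; exact hψm ht0I (right_mem_Icc.2 h01) ht0I.2
  · exact hφc.comp hθ2c.continuousOn hθ2mem
  · exact hψc.comp hθ2c.continuousOn hθ2mem
  · exact fun p hp q hq hpq => hφm (hθ2mem hp) (hθ2mem hq) (hθ2m hpq)
  · exact fun p hp q hq hpq => hψm (hθ2mem hp) (hθ2mem hq) (hθ2m hpq)
  · show φ (θ2 0) = x; rw [hθ20, hs0]
  · show φ (θ2 1) = y; rw [hθ21, hφt0]
  · show ψ (θ2 0) = ψ s0; rw [hθ20]
  · show ψ (θ2 1) = ψ t0; rw [hθ21]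
  · intro t ht; exact hd (θ2 t) (hθ2mem ht)

end FrechetAux

theorem frechet_subcurve {n : ℕ} (f g : ℝ → EuclideanSpace ℝ (Fin n))
    (hf : Continuous f) (hg : Continuous g) (r : ℝ) (hr : 0 ≤ r)
    (a x y b c d : ℝ)
    (hax : a ≤ x) (hxy : x ≤ y) (hyb : y ≤ b) (hcd : c ≤ d)
    (H : FrechetLE f g a b c d r) :
    ∃ u v : ℝ, c ≤ u ∧ u ≤ v ∧ v ≤ d ∧ FrechetLE f g x y u v r := by
  classical
  -- the candidate sets
  set T : ℕ → Set (ℝ × ℝ) := fun m =>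
    {w | c ≤ w.1 ∧ w.1 ≤ w.2 ∧ w.2 ≤ d ∧
      FrechetAux.Reparam f g x y w.1 w.2 (r + 1 / (m + 1))} with hT
  set Z : ℕ → Set (ℝ × ℝ) := fun m => closure (T m) with hZ
  have hTsub : ∀ m, T m ⊆ Set.Icc c d ×ˢ Set.Icc c d := by
    intro m w hw
    obtain ⟨h1, h2, h3, _⟩ := hw
    exact ⟨⟨h1, h2.trans h3⟩, ⟨h1.trans h2, h3⟩⟩
  have hK : IsCompact (Set.Icc c d ×ˢ Set.Icc c d) :=
    isCompact_Icc.prod isCompact_Icc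
  have hZsub : ∀ m, Z m ⊆ Set.Icc c d ×ˢ Set.Icc c d := fun m =>
    closure_minimal (hTsub m) (isClosed_Icc.prod isClosed_Icc)
  have hZne : ∀ m, (Z m).Nonempty := by
    intro m
    have hpos : (0:ℝ) < 1 / (m + 1) := by positivity
    obtain ⟨φ, ψ, h1, h2, h3, h4, h5, h6, h7, h8, h9⟩ := H _ hpos
    have hR : FrechetAux.Reparam f g a b c d (r + 1 / (m + 1)) :=
      ⟨φ, ψ, h1, h2, h3, h4, h5, h6, h7, h8, h9⟩
    obtain ⟨u, v, h1', h2', h3', h4'⟩ :=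
      FrechetAux.reparam_restrict hax hxy hyb hR
    exact ⟨(u, v), subset_closure (by exact ⟨h1', h2', h3', h4'⟩)⟩
  have hZanti : ∀ m, Z (m + 1) ⊆ Z m := by
    intro m
    apply closure_mono
    intro w hw
    obtain ⟨h1, h2, h3, h4⟩ := hw
    refine ⟨h1, h2, h3, h4.mono ?_⟩
    have hle : (1:ℝ) / (↑(m + 1) + 1) ≤ 1 / (↑m + 1) := by
      apply one_div_le_one_div_of_le
      · positivity
      · push_cast; linarith
    linarith
  have hZcl : ∀ m, IsClosed (Z m) := fun m => isClosed_closure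
  have hZcomp : IsCompact (Z 0) := hK.of_isClosed_subset (hZcl 0) (hZsub 0)
  obtain ⟨⟨u, v⟩, huv⟩ :=
    IsCompact.nonempty_iInter_of_sequence_nonempty_isCompact_isClosed Z
      hZanti hZne hZcomp hZcl
  simp only [Set.mem_iInter] at huv
  -- basic bounds for (u,v)
  have hbounds : c ≤ u ∧ u ≤ v ∧ v ≤ d := by
    have hclosed : IsClosed {w : ℝ × ℝ | c ≤ w.1 ∧ w.1 ≤ w.2 ∧ w.2 ≤ d} := by
      refine IsClosed.inter (isClosed_le continuous_const continuous_fst)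
        (IsClosed.inter (isClosed_le continuous_fst continuous_snd)
          (isClosed_le continuous_snd continuous_const))
    have hsub : T 0 ⊆ {w : ℝ × ℝ | c ≤ w.1 ∧ w.1 ≤ w.2 ∧ w.2 ≤ d} := by
      intro w hw
      obtain ⟨h1, h2, h3, _⟩ := hw
      exact ⟨h1, h2, h3⟩
    exact closure_minimal hsub hclosed (huv 0)
  obtain ⟨hcu, huv', hvd⟩ := hbounds
  refine ⟨u, v, hcu, huv', hvd, ?_⟩
  -- now prove the Fréchet bound
  intro ε hε
  -- uniform continuity of g on [c,d]
  have hgu : UniformContinuousOn g (Set.Icc c d) :=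
    isCompact_Icc.uniformContinuousOn_of_continuous hg.continuousOn
  rw [Metric.uniformContinuousOn_iff_le] at hgu
  obtain ⟨δ, hδpos, hδ⟩ := hgu (ε / 2) (by positivity)
  -- pick m with 1/(m+1) ≤ ε/2
  obtain ⟨m, hm⟩ := exists_nat_one_div_lt (show (0:ℝ) < ε / 2 by positivity)
  -- find a point of T m close to (u,v)
  have hmem : (u, v) ∈ closure (T m) := huv m
  rw [Metric.mem_closure_iff] at hmem
  obtain ⟨⟨u', v'⟩, hw', hwd⟩ := hmem δ hδpos
  obtain ⟨hcu', hu'v', hv'd, hRep⟩ := hw'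
  have hdu : |u - u'| ≤ δ := by
    rw [Prod.dist_eq] at hwd
    have := le_trans (le_max_left (dist u u') (dist v v')) hwd.le
    rwa [Real.dist_eq] at this
  have hdv : |v - v'| ≤ δ := by
    rw [Prod.dist_eq] at hwd
    have := le_trans (le_max_right (dist u u') (dist v v')) hwd.le
    rwa [Real.dist_eq] at this
  have hosc : ∀ s ∈ Set.Icc c d, ∀ s' ∈ Set.Icc c d, |s - s'| ≤ δ →
      dist (g s) (g s') ≤ ε / 2 := by
    intro s hs s' hs' habs
    exact hδ s hs s' hs' (by rwa [Real.dist_eq])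
  have hfin := FrechetAux.reparam_perturb hosc hcu' hu'v' hv'd hcu huv' hvd
    hdu hdv hRep
  have hfin2 : FrechetAux.Reparam f g x y u v (r + ε) := by
    apply hfin.mono
    have : (1:ℝ) / (m + 1) ≤ ε / 2 := hm.le
    linarith
  obtain ⟨φ, ψ, h1, h2, h3, h4, h5, h6, h7, h8, h9⟩ := hfin2
  exact ⟨φ, ψ, h1, h2, h3, h4, h5, h6, h7, h8, h9⟩
end

section
/- Let E be a Euclidean space, let f, g : ℝ → E be continuous, and let δ ≥ 0. Let a₀ ≤ a ≤ a' and c₀ ≤ c ≤ q be real numbers. If the Fréchet distance of f on [a₀,a'] and g on [c₀,q] is at most δ, then at least one of the following holds: (1) there exists p ∈ [c,q] such that the Fréchet distance of f on [a₀,a] and g on [c₀,p] is at most δ and the Fréchet distance of f on [a,a'] and g on [p,q] is at most δ; or (2) there exists x ∈ [a,a'] such that the Fréchet distance of f on [a₀,x] and g on [c₀,c] is at most δ and the Fréchet distance of f on [x,a'] and g on [c,q] is at most δ. -/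
open Set

namespace FCS

variable {E : Type*} [PseudoMetricSpace E]

/-- A single exact witness pair. -/
def IsWit (f g : ℝ → E) (a b c d r : ℝ) (φ ψ : ℝ → ℝ) : Prop :=
  ContinuousOn φ (Set.Icc 0 1) ∧ ContinuousOn ψ (Set.Icc 0 1) ∧
  MonotoneOn φ (Set.Icc 0 1) ∧ MonotoneOn ψ (Set.Icc 0 1) ∧
  φ 0 = a ∧ φ 1 = b ∧ ψ 0 = c ∧ ψ 1 = d ∧
  ∀ t ∈ Set.Icc (0:ℝ) 1, dist (f (φ t)) (g (ψ t)) ≤ r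

def Wit (f g : ℝ → E) (a b c d r : ℝ) : Prop := ∃ φ ψ, IsWit f g a b c d r φ ψ

lemma frechetLE_iff {f g : ℝ → E} {a b c d r : ℝ} :
    FrechetLE f g a b c d r ↔ ∀ ε > 0, Wit f g a b c d (r + ε) := Iff.rfl

lemma Wit.mono {f g : ℝ → E} {a b c d r r' : ℝ} (h : Wit f g a b c d r) (hr : r ≤ r') :
    Wit f g a b c d r' := by
  obtain ⟨φ, ψ, h1, h2, h3, h4, h5, h6, h7, h8, h9⟩ := h
  exact ⟨φ, ψ, h1, h2, h3, h4, h5, h6, h7, h8, fun t ht => (h9 t ht).trans hr⟩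

lemma Wit.swap {f g : ℝ → E} {a b c d r : ℝ} (h : Wit f g a b c d r) :
    Wit g f c d a b r := by
  obtain ⟨φ, ψ, h1, h2, h3, h4, h5, h6, h7, h8, h9⟩ := h
  exact ⟨ψ, φ, h2, h1, h4, h3, h7, h8, h5, h6,
    fun t ht => by rw [dist_comm]; exact h9 t ht⟩

lemma FrechetLE.swap {f g : ℝ → E} {a b c d r : ℝ} (h : FrechetLE f g a b c d r) :
    FrechetLE g f c d a b r := by
  rw [frechetLE_iff] at h ⊢
  exact fun ε hε => (h ε hε).swap

lemma IsWit.restrict {f g : ℝ → E} {a b c d r : ℝ} {φ ψ : ℝ → ℝ}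
    (h : IsWit f g a b c d r φ ψ) {u v : ℝ} (hu : u ∈ Icc (0:ℝ) 1) (hv : v ∈ Icc (0:ℝ) 1)
    (huv : u ≤ v) : Wit f g (φ u) (φ v) (ψ u) (ψ v) r := by
  obtain ⟨h1, h2, h3, h4, h5, h6, h7, h8, h9⟩ := h
  set L : ℝ → ℝ := fun s => u + s * (v - u) with hL
  have hmap : MapsTo L (Icc 0 1) (Icc 0 1) := by
    intro s hs
    simp only [hL, mem_Icc] at *
    constructor
    · nlinarith [hu.1, hu.2, hv.1, hv.2, hs.1, hs.2]
    · nlinarith [hu.1, hu.2, hv.1, hv.2, hs.1, hs.2]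
  have hLc : ContinuousOn L (Icc 0 1) :=
    (continuous_const.add (continuous_id.mul continuous_const)).continuousOn
  have hLm : MonotoneOn L (Icc 0 1) := by
    intro s hs t ht hst
    simp only [hL]
    nlinarith [hs.1, ht.1]
  have hL0 : L 0 = u := by simp [hL]
  have hL1 : L 1 = v := by simp [hL]
  refine ⟨φ ∘ L, ψ ∘ L, h1.comp hLc hmap, h2.comp hLc hmap,
    fun s hs t ht hst => h3 (hmap hs) (hmap ht) (hLm hs ht hst),
    fun s hs t ht hst => h4 (hmap hs) (hmap ht) (hLm hs ht hst),
    ?_, ?_, ?_, ?_, fun t ht => h9 (L t) (hmap ht)⟩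
  · simp [Function.comp, hL0]
  · simp [Function.comp, hL1]
  · simp [Function.comp, hL0]
  · simp [Function.comp, hL1]

lemma crossing {φ ψ : ℝ → ℝ} (hφc : ContinuousOn φ (Icc 0 1)) (hψc : ContinuousOn ψ (Icc 0 1))
    (hφm : MonotoneOn φ (Icc 0 1)) (hψm : MonotoneOn ψ (Icc 0 1))
    {a c : ℝ} (ha0 : φ 0 ≤ a) (ha1 : a ≤ φ 1) (hc0 : ψ 0 ≤ c) (hc1 : c ≤ ψ 1) :
    ∃ t ∈ Icc (0:ℝ) 1, (φ t = a ∧ c ≤ ψ t) ∨ (ψ t = c ∧ a ≤ φ t) := by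
  obtain ⟨t₁, ht₁, hφt₁⟩ := intermediate_value_Icc zero_le_one hφc ⟨ha0, ha1⟩
  obtain ⟨t₂, ht₂, hψt₂⟩ := intermediate_value_Icc zero_le_one hψc ⟨hc0, hc1⟩
  rcases le_total t₂ t₁ with h | h
  · exact ⟨t₁, ht₁, Or.inl ⟨hφt₁, hψt₂ ▸ hψm ht₂ ht₁ h⟩⟩
  · exact ⟨t₂, ht₂, Or.inr ⟨hψt₂, hφt₁ ▸ hφm ht₁ ht₂ h⟩⟩

/-- Adjust the final endpoint of the second reparameterisation from `p` to `p₀`. -/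
lemma adjust_end {f g : ℝ → E} {a₀ a c₀ p p₀ q r ε : ℝ}
    (hw : Wit f g a₀ a c₀ p r) (hc₀p₀ : c₀ ≤ p₀) (hp₀q : p₀ ≤ q) (hpq : p ≤ q)
    (hU : ∀ u ∈ Icc c₀ q, ∀ v ∈ Icc c₀ q, |u - v| ≤ |p₀ - p| → dist (g u) (g v) ≤ ε) :
    Wit f g a₀ a c₀ p₀ (r + ε) := by
  obtain ⟨φ, ψ, h1, h2, h3, h4, h5, h6, h7, h8, h9⟩ := hw
  set ψ' : ℝ → ℝ := fun t => min (ψ t) p₀ + t * max (p₀ - p) 0 with hψ'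
  have hψrange : ∀ t ∈ Icc (0:ℝ) 1, ψ t ∈ Icc c₀ p := by
    intro t ht
    exact ⟨h7 ▸ h4 (left_mem_Icc.2 zero_le_one) ht ht.1,
           h8 ▸ h4 ht (right_mem_Icc.2 zero_le_one) ht.2⟩
  have hψ'c : ContinuousOn ψ' (Icc 0 1) :=
    ((continuous_id.min continuous_const).comp_continuousOn h2).add
      (continuous_id.mul continuous_const).continuousOn
  have hψ'm : MonotoneOn ψ' (Icc 0 1) := by
    intro s hs t ht hst
    exact add_le_add (min_le_min (h4 hs ht hst) le_rfl)
      (mul_le_mul_of_nonneg_right hst (le_max_right _ _))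
  have hψ'0 : ψ' 0 = c₀ := by
    simp [hψ', h7, min_eq_left hc₀p₀]
  have hψ'1 : ψ' 1 = p₀ := by
    rcases le_total p p₀ with h | h
    · simp [hψ', h8, min_eq_left h, max_eq_left (by linarith : (0:ℝ) ≤ p₀ - p)]
    · simp [hψ', h8, min_eq_right h, max_eq_right (by linarith : p₀ - p ≤ 0)]
  have hψ'range : ∀ t ∈ Icc (0:ℝ) 1, ψ' t ∈ Icc c₀ p₀ := by
    intro t ht
    exact ⟨hψ'0 ▸ hψ'm (left_mem_Icc.2 zero_le_one) ht ht.1,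
           hψ'1 ▸ hψ'm ht (right_mem_Icc.2 zero_le_one) ht.2⟩
  have hclose : ∀ t ∈ Icc (0:ℝ) 1, |ψ' t - ψ t| ≤ |p₀ - p| := by
    intro t ht
    have hr := hψrange t ht
    rcases le_total p p₀ with h | h
    · have hm : min (ψ t) p₀ = ψ t := min_eq_left (hr.2.trans h)
      have hmax : max (p₀ - p) 0 = p₀ - p := max_eq_left (by linarith)
      rw [abs_of_nonneg (by linarith : (0:ℝ) ≤ p₀ - p)]
      simp only [hψ', hm, hmax]
      rw [abs_le]
      constructor
      · nlinarith [ht.1, ht.2]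
      · nlinarith [ht.1, ht.2]
    · have hmax : max (p₀ - p) 0 = 0 := max_eq_right (by linarith)
      rw [abs_of_nonpos (by linarith : p₀ - p ≤ 0)]
      simp only [hψ', hmax, mul_zero, add_zero]
      rw [abs_le]
      rcases le_total (ψ t) p₀ with h' | h'
      · rw [min_eq_left h']
        constructor <;> linarith
      · rw [min_eq_right h']
        constructor
        · linarith [hr.2]
        · linarith
  refine ⟨φ, ψ', h1, hψ'c, h3, hψ'm, h5, h6, hψ'0, hψ'1, fun t ht => ?_⟩
  have h9t := h9 t ht
  have hdg : dist (g (ψ t)) (g (ψ' t)) ≤ ε := by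
    have hr := hψrange t ht
    have hr' := hψ'range t ht
    refine hU (ψ t) ⟨hr.1, hr.2.trans hpq⟩ (ψ' t) ⟨hr'.1, hr'.2.trans hp₀q⟩ ?_
    rw [abs_sub_comm]
    exact hclose t ht
  calc dist (f (φ t)) (g (ψ' t)) ≤ dist (f (φ t)) (g (ψ t)) + dist (g (ψ t)) (g (ψ' t)) :=
        dist_triangle _ _ _
    _ ≤ r + ε := add_le_add h9t hdg

/-- Adjust the initial endpoint of the second reparameterisation from `p` to `p₀`. -/
lemma adjust_start {f g : ℝ → E} {x a' c₀ p p₀ q r ε : ℝ}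
    (hw : Wit f g x a' p q r) (hc₀p₀ : c₀ ≤ p₀) (hp₀q : p₀ ≤ q) (hc₀p : c₀ ≤ p)
    (hU : ∀ u ∈ Icc c₀ q, ∀ v ∈ Icc c₀ q, |u - v| ≤ |p₀ - p| → dist (g u) (g v) ≤ ε) :
    Wit f g x a' p₀ q (r + ε) := by
  obtain ⟨φ, ψ, h1, h2, h3, h4, h5, h6, h7, h8, h9⟩ := hw
  set ψ' : ℝ → ℝ := fun t => max (ψ t) p₀ + (1 - t) * min (p₀ - p) 0 with hψ'
  have hψrange : ∀ t ∈ Icc (0:ℝ) 1, ψ t ∈ Icc p q := by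
    intro t ht
    exact ⟨h7 ▸ h4 (left_mem_Icc.2 zero_le_one) ht ht.1,
           h8 ▸ h4 ht (right_mem_Icc.2 zero_le_one) ht.2⟩
  have hψ'c : ContinuousOn ψ' (Icc 0 1) :=
    ((continuous_id.max continuous_const).comp_continuousOn h2).add
      ((continuous_const.sub continuous_id).mul continuous_const).continuousOn
  have hψ'm : MonotoneOn ψ' (Icc 0 1) := by
    intro s hs t ht hst
    refine add_le_add (max_le_max (h4 hs ht hst) le_rfl) ?_
    exact mul_le_mul_of_nonpos_right (by linarith) (min_le_right _ _)
  have hψ'0 : ψ' 0 = p₀ := by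
    rcases le_total p p₀ with h | h
    · simp [hψ', h7, max_eq_right h, min_eq_right (by linarith : (0:ℝ) ≤ p₀ - p)]
    · simp [hψ', h7, max_eq_left h, min_eq_left (by linarith : p₀ - p ≤ 0)]
  have hψ'1 : ψ' 1 = q := by
    simp [hψ', h8, max_eq_left hp₀q]
  have hψ'range : ∀ t ∈ Icc (0:ℝ) 1, ψ' t ∈ Icc p₀ q := by
    intro t ht
    exact ⟨hψ'0 ▸ hψ'm (left_mem_Icc.2 zero_le_one) ht ht.1,
           hψ'1 ▸ hψ'm ht (right_mem_Icc.2 zero_le_one) ht.2⟩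
  have hclose : ∀ t ∈ Icc (0:ℝ) 1, |ψ' t - ψ t| ≤ |p₀ - p| := by
    intro t ht
    have hr := hψrange t ht
    rcases le_total p p₀ with h | h
    · have hmin : min (p₀ - p) 0 = 0 := min_eq_right (by linarith)
      rw [abs_of_nonneg (by linarith : (0:ℝ) ≤ p₀ - p)]
      simp only [hψ', hmin, mul_zero, add_zero]
      rw [abs_le]
      rcases le_total (ψ t) p₀ with h' | h'
      · rw [max_eq_right h']
        constructor <;> linarith [hr.1]
      · rw [max_eq_left h']
        constructor <;> linarith
    · have hm : max (ψ t) p₀ = ψ t := max_eq_left (h.trans hr.1)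
      have hmin : min (p₀ - p) 0 = p₀ - p := min_eq_left (by linarith)
      rw [abs_of_nonpos (by linarith : p₀ - p ≤ 0)]
      simp only [hψ', hm, hmin]
      rw [abs_le]
      constructor
      · nlinarith [ht.1, ht.2]
      · nlinarith [ht.1, ht.2]
  refine ⟨φ, ψ', h1, hψ'c, h3, hψ'm, h5, h6, hψ'0, hψ'1, fun t ht => ?_⟩
  have h9t := h9 t ht
  have hdg : dist (g (ψ t)) (g (ψ' t)) ≤ ε := by
    have hr := hψrange t ht
    have hr' := hψ'range t ht
    refine hU (ψ t) ⟨hc₀p.trans hr.1, hr.2⟩ (ψ' t) ⟨hc₀p₀.trans hr'.1, hr'.2⟩ ?_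
    rw [abs_sub_comm]
    exact hclose t ht
  calc dist (f (φ t)) (g (ψ' t)) ≤ dist (f (φ t)) (g (ψ t)) + dist (g (ψ t)) (g (ψ' t)) :=
        dist_triangle _ _ _
    _ ≤ r + ε := add_le_add h9t hdg

lemma main_case {f g : ℝ → E} (hg : Continuous g) {δ a₀ a a' c₀ c q : ℝ}
    (h₃ : c₀ ≤ c) (h₄ : c ≤ q)
    (hP : ∀ ε > 0, ∃ p ∈ Icc c q, Wit f g a₀ a c₀ p (δ + ε) ∧ Wit f g a a' p q (δ + ε)) :
    ∃ p ∈ Icc c q, FrechetLE f g a₀ a c₀ p δ ∧ FrechetLE f g a a' p q δ := by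
  have hpos : ∀ k : ℕ, (0:ℝ) < 1 / (k + 1) := fun k => by positivity
  choose P hPmem hP1 hP2 using fun k : ℕ => hP (1 / (k + 1)) (hpos k)
  obtain ⟨p₀, hp₀, σ, hσ, hlim⟩ :=
    (isCompact_Icc : IsCompact (Icc c q)).tendsto_subseq hPmem
  -- common preparation for a given ε
  have key : ∀ ε > (0:ℝ), ∃ k : ℕ, (1 : ℝ) / (σ k + 1) ≤ ε / 2 ∧
      (∀ u ∈ Icc c₀ q, ∀ v ∈ Icc c₀ q, |u - v| ≤ |p₀ - P (σ k)| → dist (g u) (g v) ≤ ε / 2) := by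
    intro ε hε
    obtain ⟨η, hη, hU⟩ := Metric.uniformContinuousOn_iff_le.1
      ((isCompact_Icc : IsCompact (Icc c₀ q)).uniformContinuousOn_of_continuous
        hg.continuousOn) (ε / 2) (by linarith)
    obtain ⟨N, hN⟩ := Metric.tendsto_atTop.1 hlim η hη
    obtain ⟨M, hM⟩ := exists_nat_one_div_lt (show (0:ℝ) < ε / 2 by linarith)
    refine ⟨max N M, ?_, ?_⟩
    · have h1 : (M : ℝ) + 1 ≤ (σ (max N M) : ℝ) + 1 := by
        have : M ≤ σ (max N M) := (le_max_right N M).trans (hσ.le_apply)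
        exact_mod_cast Nat.succ_le_succ this
      calc (1:ℝ) / (σ (max N M) + 1) ≤ 1 / ((M:ℝ) + 1) := by
            apply one_div_le_one_div_of_le (by positivity) h1
        _ ≤ ε / 2 := hM.le
    · intro u hu v hv huv
      have hd : dist (P (σ (max N M))) p₀ < η := hN (max N M) (le_max_left _ _)
      refine hU u hu v hv ?_
      rw [Real.dist_eq]
      refine huv.trans ?_
      rw [abs_sub_comm, ← Real.dist_eq]
      exact hd.le
  refine ⟨p₀, hp₀, ?_, ?_⟩
  · rw [frechetLE_iff]
    intro ε hε
    obtain ⟨k, hk1, hk2⟩ := key ε hε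
    have hw : Wit f g a₀ a c₀ (P (σ k)) (δ + ε / 2) :=
      (hP1 (σ k)).mono (by linarith)
    have := adjust_end hw (h₃.trans hp₀.1) hp₀.2 (hPmem (σ k)).2 hk2
    exact this.mono (by linarith)
  · rw [frechetLE_iff]
    intro ε hε
    obtain ⟨k, hk1, hk2⟩ := key ε hε
    have hw : Wit f g a a' (P (σ k)) q (δ + ε / 2) :=
      (hP2 (σ k)).mono (by linarith)
    have := adjust_start hw (h₃.trans hp₀.1) hp₀.2 (h₃.trans (hPmem (σ k)).1) hk2
    exact this.mono (by linarith)

end FCS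

theorem frechet_case_split {n : ℕ} (f g : ℝ → EuclideanSpace ℝ (Fin n))
    (hf : Continuous f) (hg : Continuous g) (δ : ℝ) (hδ : 0 ≤ δ)
    (a₀ a a' c₀ c q : ℝ)
    (h₁ : a₀ ≤ a) (h₂ : a ≤ a') (h₃ : c₀ ≤ c) (h₄ : c ≤ q)
    (H : FrechetLE f g a₀ a' c₀ q δ) :
    (∃ p ∈ Set.Icc c q, FrechetLE f g a₀ a c₀ p δ ∧ FrechetLE f g a a' p q δ) ∨
    (∃ x ∈ Set.Icc a a', FrechetLE f g a₀ x c₀ c δ ∧ FrechetLE f g x a' c q δ) := by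
  open FCS in
  classical
  -- the two alternatives at level ε
  set Pc : ℝ → Prop := fun ε =>
    ∃ p ∈ Set.Icc c q, FCS.Wit f g a₀ a c₀ p (δ + ε) ∧ FCS.Wit f g a a' p q (δ + ε) with hPc
  set Qc : ℝ → Prop := fun ε =>
    ∃ x ∈ Set.Icc a a', FCS.Wit f g a₀ x c₀ c (δ + ε) ∧ FCS.Wit f g x a' c q (δ + ε) with hQc
  have key : ∀ ε > (0:ℝ), Pc ε ∨ Qc ε := by
    intro ε hε
    obtain ⟨φ, ψ, hIW⟩ := (FCS.frechetLE_iff.1 H) ε hε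
    obtain ⟨h1, h2, h3, h4, h5, h6, h7, h8, h9⟩ := id hIW
    obtain ⟨t, ht, hcase⟩ := FCS.crossing (a := a) (c := c) h1 h2 h3 h4
      (by rw [h5]; exact h₁) (by rw [h6]; exact h₂)
      (by rw [h7]; exact h₃) (by rw [h8]; exact h₄)
    rcases hcase with ⟨hφt, hcψ⟩ | ⟨hψt, haφ⟩
    · left
      have hψq : ψ t ≤ q := by
        rw [← h8]; exact h4 ht (Set.right_mem_Icc.2 zero_le_one) ht.2
      have w1 := hIW.restrict (Set.left_mem_Icc.2 zero_le_one) ht ht.1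
      have w2 := hIW.restrict ht (Set.right_mem_Icc.2 zero_le_one) ht.2
      rw [h5, h7, hφt] at w1
      rw [h6, h8, hφt] at w2
      exact ⟨ψ t, ⟨hcψ, hψq⟩, w1, w2⟩
    · right
      have hφa' : φ t ≤ a' := by
        rw [← h6]; exact h3 ht (Set.right_mem_Icc.2 zero_le_one) ht.2
      have w1 := hIW.restrict (Set.left_mem_Icc.2 zero_le_one) ht ht.1
      have w2 := hIW.restrict ht (Set.right_mem_Icc.2 zero_le_one) ht.2
      rw [h5, h7, hψt] at w1
      rw [h6, h8, hψt] at w2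
      exact ⟨φ t, ⟨haφ, hφa'⟩, w1, w2⟩
  by_cases hPall : ∀ ε > (0:ℝ), Pc ε
  · exact Or.inl (FCS.main_case hg h₃ h₄ hPall)
  · right
    push_neg at hPall
    obtain ⟨ε₁, hε₁, hnP⟩ := hPall
    have hQall : ∀ ε > (0:ℝ), Qc ε := by
      intro ε hε
      rcases key (min ε ε₁) (lt_min hε hε₁) with h | h
      · exfalso
        apply hnP
        obtain ⟨p, hp, w1, w2⟩ := h
        exact ⟨p, hp, w1.mono (by linarith [min_le_right ε ε₁]),
          w2.mono (by linarith [min_le_right ε ε₁])⟩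
      · obtain ⟨x, hx, w1, w2⟩ := h
        exact ⟨x, hx, w1.mono (by linarith [min_le_left ε ε₁]),
          w2.mono (by linarith [min_le_left ε ε₁])⟩
    have hQall' : ∀ ε > (0:ℝ), ∃ p ∈ Set.Icc a a',
        FCS.Wit g f c₀ c a₀ p (δ + ε) ∧ FCS.Wit g f c q p a' (δ + ε) := by
      intro ε hε
      obtain ⟨x, hx, w1, w2⟩ := hQall ε hε
      exact ⟨x, hx, w1.swap, w2.swap⟩
    obtain ⟨x, hx, F1, F2⟩ := FCS.main_case hf h₁ h₂ hQall'
    exact ⟨x, hx, FCS.FrechetLE.swap F1, FCS.FrechetLE.swap F2⟩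
end

section
/- Let E be a Euclidean space, let f, g, h : ℝ → E be continuous, and let r₁, r₂ ≥ 0. Let a ≤ x ≤ y ≤ b, c ≤ d, and u ≤ v be real numbers. If the Fréchet distance of f on [a,b] and g on [c,d] is at most r₁, and the Fréchet distance of f on [x,y] and h on [u,v] is at most r₂, then there exist real numbers c', d' with c ≤ c' ≤ d' ≤ d such that the Fréchet distance of g on [c',d'] and h on [u,v] is at most r₁ + r₂. -/
open Set Filter

noncomputable section
namespace FrechetAux

def clamp (s : ℝ) : ℝ := max 0 (min 1 s)

lemma clamp_mem (s : ℝ) : clamp s ∈ Icc (0:ℝ) 1 :=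
  ⟨le_max_left _ _, max_le (by norm_num) (min_le_left _ _)⟩

lemma clamp_of_mem {s : ℝ} (h : s ∈ Icc (0:ℝ) 1) : clamp s = s := by
  unfold clamp; rw [min_eq_right h.2, max_eq_right h.1]

lemma clamp_mono : Monotone clamp :=
  fun s t hst => max_le_max le_rfl (min_le_min le_rfl hst)

lemma clamp_cont : Continuous clamp :=
  continuous_const.max (continuous_const.min continuous_id)

lemma ext_cont {φ : ℝ → ℝ} (hc : ContinuousOn φ (Icc 0 1)) : Continuous (φ ∘ clamp) :=
  hc.comp_continuous clamp_cont clamp_mem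

lemma ext_mono {φ : ℝ → ℝ} (hm : MonotoneOn φ (Icc 0 1)) : Monotone (φ ∘ clamp) :=
  fun s t hst => hm (clamp_mem s) (clamp_mem t) (clamp_mono hst)

lemma inverse_exists {m : ℝ → ℝ} (hc : Continuous m) (hm : Monotone m) {lo hi : ℝ}
    (hb : ∀ s, m s ∈ Icc lo hi) {δ : ℝ} (hδ : 0 < δ) :
    ∃ σ : ℝ → ℝ, Continuous σ ∧ Monotone σ ∧ (∀ w, m (σ w) + δ * σ w = w)
      ∧ (∀ s, σ (m s + δ * s) = s) := by
  set M : ℝ → ℝ := fun s => m s + δ * s with hM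
  have hMs : StrictMono M := fun s t hst => by
    have h1 := hm hst.le
    have h2 := mul_lt_mul_of_pos_left hst hδ
    simp only [hM]; linarith
  have hMc : Continuous M := hc.add (continuous_const.mul continuous_id)
  have htop : Tendsto M atTop atTop := by
    refine tendsto_atTop_mono (fun s => ?_)
      (tendsto_atTop_add_const_left atTop lo (Tendsto.const_mul_atTop hδ tendsto_id))
    have := (hb s).1; simp only [hM, id]; linarith
  have hbot : Tendsto M atBot atBot := by
    refine tendsto_atBot_mono (fun s => ?_)
      (tendsto_atBot_add_const_left atBot hi (Tendsto.const_mul_atBot hδ tendsto_id))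
    have := (hb s).2; simp only [hM, id]; linarith
  have hsurj := hMc.surjective htop hbot
  let e := StrictMono.orderIsoOfSurjective M hMs hsurj
  have hecoe : ∀ s, e s = M s := fun _ => rfl
  refine ⟨e.symm, e.symm.continuous, e.symm.monotone, fun w => ?_, fun s => ?_⟩
  · have h1 : e (e.symm w) = w := e.apply_symm_apply w
    rw [hecoe] at h1; exact h1
  · have h1 : e.symm (e s) = s := e.symm_apply_apply s
    rw [hecoe] at h1; exact h1

set_option maxHeartbeats 1000000 in
lemma core {E : Type*} [PseudoMetricSpace E] (f g h : ℝ → E)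
    (hf : Continuous f) (r₁ r₂ : ℝ)
    (a x y b c d u v : ℝ)
    (hax : a ≤ x) (hxy : x ≤ y) (hyb : y ≤ b)
    (H₁ : FrechetLE f g a b c d r₁) (H₂ : FrechetLE f h x y u v r₂) :
    ∀ ε > 0, ∃ c' d' : ℝ, c ≤ c' ∧ c' ≤ d' ∧ d' ≤ d ∧
      ∃ φ ψ : ℝ → ℝ, Continuous φ ∧ Continuous ψ ∧ Monotone φ ∧ Monotone ψ ∧
        φ 0 = c' ∧ φ 1 = d' ∧ ψ 0 = u ∧ ψ 1 = v ∧
        ∀ t ∈ Icc (0:ℝ) 1, dist (g (φ t)) (h (ψ t)) ≤ r₁ + r₂ + ε := by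
  intro ε hε
  have hε3 : (0:ℝ) < ε/3 := by linarith
  -- uniform continuity of f on [x,y]
  have hfu : UniformContinuousOn f (Icc x y) :=
    isCompact_Icc.uniformContinuousOn_of_continuous hf.continuousOn
  obtain ⟨δ, hδ, hδf⟩ := Metric.uniformContinuousOn_iff.1 hfu (ε/3) hε3
  obtain ⟨φ₁, ψ₁, hφ₁c, hψ₁c, hφ₁m, hψ₁m, hφ₁0, hφ₁1, hψ₁0, hψ₁1, hd₁⟩ := H₁ (ε/3) hε3
  obtain ⟨φ₂, ψ₂, hφ₂c, hψ₂c, hφ₂m, hψ₂m, hφ₂0, hφ₂1, hψ₂0, hψ₂1, hd₂⟩ := H₂ (ε/3) hε3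
  set Φ₁ := φ₁ ∘ clamp with hΦ₁
  set Ψ₁ := ψ₁ ∘ clamp with hΨ₁
  set Φ₂ := φ₂ ∘ clamp with hΦ₂
  set Ψ₂ := ψ₂ ∘ clamp with hΨ₂
  have hΦ₁cont : Continuous Φ₁ := ext_cont hφ₁c
  have hΨ₁cont : Continuous Ψ₁ := ext_cont hψ₁c
  have hΦ₂cont : Continuous Φ₂ := ext_cont hφ₂c
  have hΨ₂cont : Continuous Ψ₂ := ext_cont hψ₂c
  have hΦ₁mono : Monotone Φ₁ := ext_mono hφ₁m
  have hΨ₁mono : Monotone Ψ₁ := ext_mono hψ₁m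
  have hΦ₂mono : Monotone Φ₂ := ext_mono hφ₂m
  have hΨ₂mono : Monotone Ψ₂ := ext_mono hψ₂m
  have hΦ₁eq : ∀ s ∈ Icc (0:ℝ) 1, Φ₁ s = φ₁ s := fun s hs => by
    simp only [hΦ₁, Function.comp, clamp_of_mem hs]
  have hΨ₁eq : ∀ s ∈ Icc (0:ℝ) 1, Ψ₁ s = ψ₁ s := fun s hs => by
    simp only [hΨ₁, Function.comp, clamp_of_mem hs]
  have hΦ₂eq : ∀ s ∈ Icc (0:ℝ) 1, Φ₂ s = φ₂ s := fun s hs => by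
    simp only [hΦ₂, Function.comp, clamp_of_mem hs]
  have hΨ₂eq : ∀ s ∈ Icc (0:ℝ) 1, Ψ₂ s = ψ₂ s := fun s hs => by
    simp only [hΨ₂, Function.comp, clamp_of_mem hs]
  have h01 : (0:ℝ) ∈ Icc (0:ℝ) 1 := by norm_num
  have h11 : (1:ℝ) ∈ Icc (0:ℝ) 1 := by norm_num
  have hΦ₁0 : Φ₁ 0 = a := by rw [hΦ₁eq 0 h01, hφ₁0]
  have hΦ₁1 : Φ₁ 1 = b := by rw [hΦ₁eq 1 h11, hφ₁1]
  have hΨ₁0 : Ψ₁ 0 = c := by rw [hΨ₁eq 0 h01, hψ₁0]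
  have hΨ₁1 : Ψ₁ 1 = d := by rw [hΨ₁eq 1 h11, hψ₁1]
  have hΦ₂0 : Φ₂ 0 = x := by rw [hΦ₂eq 0 h01, hφ₂0]
  have hΦ₂1 : Φ₂ 1 = y := by rw [hΦ₂eq 1 h11, hφ₂1]
  have hΨ₂0 : Ψ₂ 0 = u := by rw [hΨ₂eq 0 h01, hψ₂0]
  have hΨ₂1 : Ψ₂ 1 = v := by rw [hΨ₂eq 1 h11, hψ₂1]
  -- find s₀ with Φ₁ s₀ = x and s₁ ≥ s₀ with Φ₁ s₁ = y
  obtain ⟨s₀, hs₀mem, hs₀⟩ : ∃ s₀ ∈ Icc (0:ℝ) 1, Φ₁ s₀ = x := by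
    have := intermediate_value_Icc (by norm_num : (0:ℝ) ≤ 1) hΦ₁cont.continuousOn
    rw [hΦ₁0, hΦ₁1] at this
    obtain ⟨s₀, hmem, heq⟩ := this ⟨hax, hxy.trans hyb⟩
    exact ⟨s₀, hmem, heq⟩
  obtain ⟨s₁, hs₁mem, hs₁⟩ : ∃ s₁ ∈ Icc s₀ 1, Φ₁ s₁ = y := by
    have := intermediate_value_Icc hs₀mem.2 hΦ₁cont.continuousOn
    rw [hs₀, hΦ₁1] at this
    obtain ⟨s₁, hmem, heq⟩ := this ⟨hxy, hyb⟩
    exact ⟨s₁, hmem, heq⟩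
  set ℓ : ℝ → ℝ := fun t => s₀ + t * (s₁ - s₀) with hℓ
  have hℓ0 : ℓ 0 = s₀ := by simp [hℓ]
  have hℓ1 : ℓ 1 = s₁ := by simp [hℓ]
  have hℓmono : Monotone ℓ := fun s t hst => by
    have : 0 ≤ s₁ - s₀ := by linarith [hs₁mem.1]
    simp only [hℓ]; nlinarith
  have hℓcont : Continuous ℓ := continuous_const.add (continuous_id.mul continuous_const)
  have hℓmem : ∀ t ∈ Icc (0:ℝ) 1, ℓ t ∈ Icc (0:ℝ) 1 := fun t ht => by
    constructor
    · have := hℓmono ht.1; rw [hℓ0] at this; linarith [hs₀mem.1]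
    · have := hℓmono ht.2; rw [hℓ1] at this; linarith [hs₁mem.2]
  -- the inverse trick
  set p : ℝ → ℝ := Φ₁ ∘ ℓ with hp
  have hpmono : Monotone p := hΦ₁mono.comp hℓmono
  have hpcont : Continuous p := hΦ₁cont.comp hℓcont
  have hpb : ∀ s, p s ∈ Icc a b := fun s => by
    have h1 := hΦ₁mono (clamp_mem (ℓ s)).1
    have h2 := hΦ₁mono (clamp_mem (ℓ s)).2
    have hcl : Φ₁ (ℓ s) = Φ₁ (clamp (ℓ s)) := by
      simp only [hΦ₁, Function.comp]
      rw [clamp_of_mem (clamp_mem (ℓ s))]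
    rw [hΦ₁0] at h1; rw [hΦ₁1] at h2
    exact ⟨by simp only [hp, Function.comp]; rw [hcl]; exact h1,
           by simp only [hp, Function.comp]; rw [hcl]; exact h2⟩
  have hqb : ∀ s, Φ₂ s ∈ Icc x y := fun s => by
    have h1 := hΦ₂mono (clamp_mem s).1
    have h2 := hΦ₂mono (clamp_mem s).2
    have hcl : Φ₂ s = Φ₂ (clamp s) := by
      simp only [hΦ₂, Function.comp]; rw [clamp_of_mem (clamp_mem s)]
    rw [hΦ₂0] at h1; rw [hΦ₂1] at h2
    exact ⟨by rw [hcl]; exact h1, by rw [hcl]; exact h2⟩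
  have hδ2 : (0:ℝ) < δ/2 := by linarith
  obtain ⟨σinv, hσinvc, hσinvm, hright, hleft⟩ := inverse_exists hΦ₂cont hΦ₂mono hqb hδ2
  set σ : ℝ → ℝ := fun t => σinv (p t + δ/2 * t) with hσ
  have hσmono : Monotone σ := fun s t hst => by
    apply hσinvm
    have := hpmono hst
    nlinarith
  have hσcont : Continuous σ :=
    hσinvc.comp (hpcont.add (continuous_const.mul continuous_id))
  have hσ0 : σ 0 = 0 := by
    have hp0 : p 0 = x := by simp only [hp, Function.comp]; rw [hℓ0, hs₀]
    have := hleft 0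
    rw [hΦ₂0] at this
    simp only [hσ, hp0]
    simpa using this
  have hσ1 : σ 1 = 1 := by
    have hp1 : p 1 = y := by simp only [hp, Function.comp]; rw [hℓ1, hs₁]
    have := hleft 1
    rw [hΦ₂1] at this
    simp only [hσ, hp1]
    simpa using this
  have hσmem : ∀ t ∈ Icc (0:ℝ) 1, σ t ∈ Icc (0:ℝ) 1 := fun t ht => by
    constructor
    · have := hσmono ht.1; rw [hσ0] at this; exact this
    · have := hσmono ht.2; rw [hσ1] at this; exact this
  have hkey : ∀ t ∈ Icc (0:ℝ) 1, |Φ₂ (σ t) - p t| ≤ δ/2 := fun t ht => by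
    have h1 := hright (p t + δ/2 * t)
    have hσt := hσmem t ht
    have : Φ₂ (σ t) - p t = δ/2 * (t - σ t) := by
      have : Φ₂ (σinv (p t + δ/2 * t)) + δ/2 * σinv (p t + δ/2 * t) = p t + δ/2 * t := h1
      simp only [hσ]; linarith
    rw [this, abs_mul, abs_of_pos hδ2]
    have : |t - σ t| ≤ 1 := by
      rw [abs_le]; constructor <;> [linarith [ht.1, hσt.2]; linarith [ht.2, hσt.1]]
    nlinarith
  -- the answer
  refine ⟨Ψ₁ s₀, Ψ₁ s₁, ?_, ?_, ?_, Ψ₁ ∘ ℓ, Ψ₂ ∘ σ,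
    hΨ₁cont.comp hℓcont, hΨ₂cont.comp hσcont, hΨ₁mono.comp hℓmono, hΨ₂mono.comp hσmono,
    by simp only [Function.comp]; rw [hℓ0],
    by simp only [Function.comp]; rw [hℓ1],
    by simp only [Function.comp]; rw [hσ0, hΨ₂0],
    by simp only [Function.comp]; rw [hσ1, hΨ₂1], ?_⟩
  · rw [← hΨ₁0]; exact hΨ₁mono hs₀mem.1
  · exact hΨ₁mono hs₁mem.1
  · rw [← hΨ₁1]; exact hΨ₁mono hs₁mem.2
  · intro t ht
    have hℓt := hℓmem t ht
    have hσt := hσmem t ht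
    have term1 : dist (g (Ψ₁ (ℓ t))) (f (Φ₁ (ℓ t))) ≤ r₁ + ε/3 := by
      rw [hΨ₁eq _ hℓt, hΦ₁eq _ hℓt, dist_comm]
      exact hd₁ (ℓ t) hℓt
    have term3 : dist (f (Φ₂ (σ t))) (h (Ψ₂ (σ t))) ≤ r₂ + ε/3 := by
      rw [hΨ₂eq _ hσt, hΦ₂eq _ hσt]
      exact hd₂ (σ t) hσt
    have term2 : dist (f (Φ₁ (ℓ t))) (f (Φ₂ (σ t))) ≤ ε/3 := by
      have hmem1 : Φ₁ (ℓ t) ∈ Icc x y := by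
        constructor
        · rw [← hs₀]; exact hΦ₁mono (hℓ0.symm.trans_le (hℓmono ht.1))
        · rw [← hs₁]; exact hΦ₁mono ((hℓmono ht.2).trans_eq hℓ1)
      have hmem2 : Φ₂ (σ t) ∈ Icc x y := hqb (σ t)
      have hdist : dist (Φ₁ (ℓ t)) (Φ₂ (σ t)) < δ := by
        rw [Real.dist_eq]
        have := hkey t ht
        have : |Φ₁ (ℓ t) - Φ₂ (σ t)| ≤ δ/2 := by
          rw [abs_sub_comm]; exact this
        linarith
      exact (hδf _ hmem1 _ hmem2 hdist).le
    calc dist (g ((Ψ₁ ∘ ℓ) t)) (h ((Ψ₂ ∘ σ) t))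
        ≤ dist (g (Ψ₁ (ℓ t))) (f (Φ₁ (ℓ t))) + dist (f (Φ₁ (ℓ t))) (f (Φ₂ (σ t)))
          + dist (f (Φ₂ (σ t))) (h (Ψ₂ (σ t))) := dist_triangle4 _ _ _ _
      _ ≤ (r₁ + ε/3) + ε/3 + (r₂ + ε/3) := by gcongr
      _ = r₁ + r₂ + ε := by ring
end FrechetAux

set_option maxHeartbeats 1000000 in
theorem frechet_subcurve_triangle {n : ℕ}
    (f g h : ℝ → EuclideanSpace ℝ (Fin n))
    (hf : Continuous f) (hg : Continuous g) (hh : Continuous h)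
    (r₁ r₂ : ℝ) (hr₁ : 0 ≤ r₁) (hr₂ : 0 ≤ r₂)
    (a x y b c d u v : ℝ)
    (hax : a ≤ x) (hxy : x ≤ y) (hyb : y ≤ b) (hcd : c ≤ d) (huv : u ≤ v)
    (H₁ : FrechetLE f g a b c d r₁) (H₂ : FrechetLE f h x y u v r₂) :
    ∃ c' d' : ℝ, c ≤ c' ∧ c' ≤ d' ∧ d' ≤ d ∧
      FrechetLE g h c' d' u v (r₁ + r₂) := by
  have key : ∀ m : ℕ, ∃ c' d' : ℝ, c ≤ c' ∧ c' ≤ d' ∧ d' ≤ d ∧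
      ∃ φ ψ : ℝ → ℝ, Continuous φ ∧ Continuous ψ ∧ Monotone φ ∧ Monotone ψ ∧
        φ 0 = c' ∧ φ 1 = d' ∧ ψ 0 = u ∧ ψ 1 = v ∧
        ∀ t ∈ Set.Icc (0:ℝ) 1, dist (g (φ t)) (h (ψ t)) ≤ r₁ + r₂ + 1/(m+1) := by
    intro m
    exact FrechetAux.core f g h hf r₁ r₂ a x y b c d u v hax hxy hyb H₁ H₂
      (1/(m+1)) (by positivity)
  choose cs ds h1 h2 h3 hm using key
  have hz : ∀ m : ℕ, (cs m, ds m) ∈ Set.Icc c d ×ˢ Set.Icc c d := fun m =>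
    ⟨⟨h1 m, (h2 m).trans (h3 m)⟩, ⟨(h1 m).trans (h2 m), h3 m⟩⟩
  obtain ⟨⟨c', d'⟩, hmem, k, hk, hconv⟩ :=
    (isCompact_Icc.prod isCompact_Icc).tendsto_subseq hz
  have hcconv : Tendsto (fun i => cs (k i)) atTop (nhds c') :=
    (continuous_fst.tendsto (c', d')).comp hconv
  have hdconv : Tendsto (fun i => ds (k i)) atTop (nhds d') :=
    (continuous_snd.tendsto (c', d')).comp hconv
  have hc'd' : c' ≤ d' :=
    le_of_tendsto_of_tendsto' hcconv hdconv (fun i => h2 (k i))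
  refine ⟨c', d', hmem.1.1, hc'd', hmem.2.2, ?_⟩
  intro ε hε
  -- uniform continuity of g on [c,d]
  have hgu : UniformContinuousOn g (Set.Icc c d) :=
    isCompact_Icc.uniformContinuousOn_of_continuous hg.continuousOn
  obtain ⟨δg, hδg, hδgs⟩ := Metric.uniformContinuousOn_iff.1 hgu (ε/2) (by linarith)
  obtain ⟨N₁, hN₁⟩ := Metric.tendsto_atTop.1 hcconv (δg/2) (by linarith)
  obtain ⟨N₂, hN₂⟩ := Metric.tendsto_atTop.1 hdconv (δg/2) (by linarith)
  obtain ⟨N₃, hN₃⟩ := exists_nat_gt (2/ε)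
  set i := max (max N₁ N₂) N₃ with hi
  set m := k i with hmdef
  have him : i ≤ m := hk.le_apply
  have hcsm : dist (cs m) c' < δg/2 := hN₁ i (le_trans (le_max_left _ _) (le_max_left _ _) |>.trans le_rfl)
  have hdsm : dist (ds m) d' < δg/2 := hN₂ i (le_trans (le_max_right _ _) (le_max_left _ _))
  have hbound : 1/((m:ℝ)+1) ≤ ε/2 := by
    have h1 : (N₃ : ℝ) ≤ m := by
      exact_mod_cast le_trans (le_max_right _ _) him
    have h2 : 2/ε < (m:ℝ) + 1 := by linarith
    rw [div_le_div_iff₀ (by positivity) (by norm_num)]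
    rw [div_lt_iff₀ hε] at h2
    nlinarith
  obtain ⟨φ, ψ, hφc, hψc, hφm, hψm, hφ0, hφ1, hψ0, hψ1, hdist⟩ := hm m
  have hcsd : cs m ≤ ds m := h2 m
  have hφmem : ∀ t ∈ Set.Icc (0:ℝ) 1, φ t ∈ Set.Icc (cs m) (ds m) := fun t ht =>
    ⟨hφ0 ▸ hφm ht.1, hφ1 ▸ hφm ht.2⟩
  have hsubIcc : Set.Icc (cs m) (ds m) ⊆ Set.Icc c d :=
    Set.Icc_subset_Icc (h1 m) (h3 m)
  have hsub'Icc : Set.Icc c' d' ⊆ Set.Icc c d :=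
    Set.Icc_subset_Icc hmem.1.1 hmem.2.2
  have habs1 : |c' - cs m| < δg/2 := by rw [abs_sub_comm, ← Real.dist_eq]; exact hcsm
  have habs2 : |d' - ds m| < δg/2 := by rw [abs_sub_comm, ← Real.dist_eq]; exact hdsm
  -- build adjusted φ̂
  by_cases hdeg : cs m = ds m
  · -- degenerate case: φ is constant on [0,1]
    have hφconst : ∀ t ∈ Set.Icc (0:ℝ) 1, φ t = cs m := fun t ht =>
      le_antisymm ((hφmem t ht).2.trans_eq hdeg.symm) (hφmem t ht).1
    refine ⟨fun t => c' + (d' - c') * t, ψ,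
      (continuous_const.add (continuous_const.mul continuous_id)).continuousOn,
      hψc.continuousOn,
      (fun s _ t _ hst => by nlinarith [hc'd'] : MonotoneOn _ (Set.Icc (0:ℝ) 1)),
      hψm.monotoneOn _,
      by ring, by ring, hψ0, hψ1, ?_⟩
    intro t ht
    have hval : c' + (d' - c') * t ∈ Set.Icc c' d' := by
      constructor
      · nlinarith [ht.1, ht.2, hc'd']
      · nlinarith [ht.1, ht.2, hc'd']
    have hclose : dist (c' + (d' - c') * t) (φ t) < δg := by
      rw [hφconst t ht, Real.dist_eq, abs_lt]
      have e1 := abs_lt.1 habs1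
      have e2 := abs_lt.1 habs2
      constructor
      · linarith [hval.1, e1.1]
      · linarith [hval.2, e2.2, hdeg.le, hdeg.ge]
    calc dist (g (c' + (d' - c') * t)) (h (ψ t))
        ≤ dist (g (c' + (d' - c') * t)) (g (φ t)) + dist (g (φ t)) (h (ψ t)) :=
          dist_triangle _ _ _
      _ ≤ ε/2 + (r₁ + r₂ + 1/(m+1)) := by
          refine add_le_add ?_ (hdist t ht)
          exact (hδgs _ (hsub'Icc hval) _ (hsubIcc (hφmem t ht)) hclose).le
      _ ≤ (r₁ + r₂) + ε := by linarith
  · -- nondegenerate case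
    have hlt : cs m < ds m := lt_of_le_of_ne hcsd hdeg
    have hne : ds m - cs m ≠ 0 := by linarith
    set lam : ℝ → ℝ := fun t => (φ t - cs m) / (ds m - cs m) with hlam
    set φh : ℝ → ℝ := fun t => c' + (d' - c') * lam t with hφh
    have hlam0 : lam 0 = 0 := by simp [hlam, hφ0]
    have hlam1 : lam 1 = 1 := by simp [hlam, hφ1]; exact hne
    have hlammem : ∀ t ∈ Set.Icc (0:ℝ) 1, lam t ∈ Set.Icc (0:ℝ) 1 := fun t ht => by
      have := hφmem t ht
      constructor
      · apply div_nonneg (by linarith [this.1]) (by linarith)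
      · rw [div_le_one (by linarith)]; linarith [this.2]
    refine ⟨φh, ψ, ?_, hψc.continuousOn, ?_, hψm.monotoneOn _,
      by simp [hφh, hlam0], by simp [hφh, hlam1], hψ0, hψ1, ?_⟩
    · exact (continuous_const.add (continuous_const.mul
        ((hφc.sub continuous_const).div_const _))).continuousOn
    · intro s _ t _ hst
      have hms : lam s ≤ lam t := by
        simp only [hlam]
        have := hφm hst
        gcongr
        all_goals linarith
      simp only [hφh]
      nlinarith [hc'd']
    · intro t ht
      have hl := hlammem t ht
      have hid : φ t = cs m + lam t * (ds m - cs m) := by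
        simp only [hlam]; field_simp; ring
      have hdev : φh t - φ t = (1 - lam t) * (c' - cs m) + lam t * (d' - ds m) := by
        rw [hid]; simp only [hφh]; ring
      have habs : |φh t - φ t| < δg := by
        rw [hdev]
        calc |(1 - lam t) * (c' - cs m) + lam t * (d' - ds m)|
            ≤ |(1 - lam t) * (c' - cs m)| + |lam t * (d' - ds m)| := abs_add_le _ _
          _ = (1 - lam t) * |c' - cs m| + lam t * |d' - ds m| := by
              rw [abs_mul, abs_mul, abs_of_nonneg (by linarith [hl.2]),
                abs_of_nonneg hl.1]
          _ ≤ (1 - lam t) * (δg/2) + lam t * (δg/2) := by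
              refine add_le_add ?_ ?_
              · exact mul_le_mul_of_nonneg_left habs1.le (by linarith [hl.2])
              · exact mul_le_mul_of_nonneg_left habs2.le hl.1
          _ = δg/2 := by ring
          _ < δg := by linarith
      have hφhval : φh t ∈ Set.Icc c' d' := by
        constructor
        · simp only [hφh]; nlinarith [hl.1, hl.2, hc'd']
        · simp only [hφh]; nlinarith [hl.1, hl.2, hc'd']
      calc dist (g (φh t)) (h (ψ t))
          ≤ dist (g (φh t)) (g (φ t)) + dist (g (φ t)) (h (ψ t)) := dist_triangle _ _ _
        _ ≤ ε/2 + (r₁ + r₂ + 1/(m+1)) := by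
            refine add_le_add ?_ (hdist t ht)
            refine (hδgs _ (hsub'Icc hφhval) _ (hsubIcc (hφmem t ht)) ?_).le
            rw [Real.dist_eq]; exact habs
        _ ≤ (r₁ + r₂) + ε := by linarith
end
end

section
/- Let E be a Euclidean space, let f, g : ℝ → E be continuous, and let r ≥ 0. Let x ≤ a ≤ b and c ≤ d be real numbers. If dist (f t) (g c) ≤ r for every t ∈ [x,a], and the Fréchet distance of f on [a,b] and g on [c,d] is at most r, then the Fréchet distance of f on [x,b] and g on [c,d] is at most r. -/
theorem frechet_prepend {n : ℕ} (f g : ℝ → EuclideanSpace ℝ (Fin n))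
    (hf : Continuous f) (hg : Continuous g) (r : ℝ) (hr : 0 ≤ r)
    (x a b c d : ℝ) (hxa : x ≤ a) (hab : a ≤ b) (hcd : c ≤ d)
    (Hseg : ∀ t ∈ Set.Icc x a, dist (f t) (g c) ≤ r)
    (H : FrechetLE f g a b c d r) :
    FrechetLE f g x b c d r := by
  intro ε hε
  obtain ⟨φ, ψ, hφc, hψc, hφm, hψm, hφ0, hφ1, hψ0, hψ1, hclose⟩ := H ε hε
  set u : ℝ → ℝ := fun t => max (2 * t - 1) 0 with hu
  have humono : Monotone u := by
    intro s t hst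
    exact max_le_max (by linarith) le_rfl
  have humaps : ∀ t ∈ Set.Icc (0:ℝ) 1, u t ∈ Set.Icc (0:ℝ) 1 := by
    rintro t ⟨h0, h1⟩
    exact ⟨le_max_right _ _, max_le (by linarith) (by norm_num)⟩
  have hucont : Continuous u := by
    fun_prop
  refine ⟨fun t => φ (u t) + min (2 * t - 1) 0 * (a - x), fun t => ψ (u t),
    ?_, ?_, ?_, ?_, ?_, ?_, ?_, ?_, ?_⟩
  · exact (hφc.comp hucont.continuousOn humaps).add
      (Continuous.continuousOn (by fun_prop))
  · exact hψc.comp hucont.continuousOn humaps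
  · intro s hs t ht hst
    dsimp only
    have h1 : φ (u s) ≤ φ (u t) := hφm (humaps s hs) (humaps t ht) (humono hst)
    have h2 : min (2 * s - 1) 0 ≤ min (2 * t - 1) 0 := min_le_min (by linarith) le_rfl
    have h3 : min (2 * s - 1) 0 * (a - x) ≤ min (2 * t - 1) 0 * (a - x) :=
      mul_le_mul_of_nonneg_right h2 (by linarith)
    linarith
  · intro s hs t ht hst
    exact hψm (humaps s hs) (humaps t ht) (humono hst)
  · simp only [hu]
    norm_num [hφ0]
  · simp only [hu]
    norm_num [hφ1]
  · simp only [hu]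
    norm_num [hψ0]
  · simp only [hu]
    norm_num [hψ1]
  · rintro t ⟨h0, h1⟩
    dsimp only
    rcases le_or_gt (2 * t - 1) 0 with h | h
    · have hu0 : u t = 0 := max_eq_right h
      have hmin : min (2 * t - 1) 0 = 2 * t - 1 := min_eq_left h
      rw [hu0, hmin, hφ0, hψ0]
      have hmem : a + (2 * t - 1) * (a - x) ∈ Set.Icc x a := by
        constructor <;> nlinarith
      have := Hseg _ hmem
      linarith
    · have hu0 : u t = 2 * t - 1 := max_eq_left h.le
      have hmin : min (2 * t - 1) 0 = 0 := min_eq_right h.le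
      rw [hu0, hmin]
      simpa using hclose (2 * t - 1) ⟨h.le, by linarith⟩
end

section
/- Let E be a Euclidean space, let f, g : ℝ → E be continuous, let r ≥ 0, and let a ≤ b, c ≤ d be real numbers. Suppose f and g are piecewise affine: there are finite partitions a = t₀ < t₁ < … < t_n = b and c = s₀ < s₁ < … < s_m = d such that for every i and every λ ∈ [0,1], f ((1−λ)·t_i + λ·t_{i+1}) = (1−λ)•f(t_i) + λ•f(t_{i+1}), and similarly g is affine on each [s_j, s_{j+1}]. If the Fréchet distance of f on [a,b] and g on [c,d] is at most r, then the infimum is attained: there exist continuous monotone nondecreasing functions φ, ψ : [0,1] → ℝ with φ 0 = a, φ 1 = b, ψ 0 = c, ψ 1 = d, such that dist (f (φ t)) (g (ψ t)) ≤ r for all t ∈ [0,1]. -/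
open Set


/-- Any ε-witness pair of reparameterizations can be replaced by one that is
uniformly `L`-Lipschitz, where `L = (b-a)+(d-c)+1`. -/
lemma frechet_lipschitz_reparam {E : Type*} [PseudoMetricSpace E] (f g : ℝ → E)
    (a b c d r ε : ℝ)
    (h : ∃ φ ψ : ℝ → ℝ,
      ContinuousOn φ (Set.Icc 0 1) ∧ ContinuousOn ψ (Set.Icc 0 1) ∧
      MonotoneOn φ (Set.Icc 0 1) ∧ MonotoneOn ψ (Set.Icc 0 1) ∧
      φ 0 = a ∧ φ 1 = b ∧ ψ 0 = c ∧ ψ 1 = d ∧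
      ∀ t ∈ Set.Icc (0:ℝ) 1, dist (f (φ t)) (g (ψ t)) ≤ r + ε) :
    ∃ φ ψ : ℝ → ℝ,
      MonotoneOn φ (Set.Icc 0 1) ∧ MonotoneOn ψ (Set.Icc 0 1) ∧
      (∀ p ∈ Set.Icc (0:ℝ) 1, ∀ q ∈ Set.Icc (0:ℝ) 1,
        |φ p - φ q| ≤ ((b-a)+(d-c)+1) * |p - q|) ∧
      (∀ p ∈ Set.Icc (0:ℝ) 1, ∀ q ∈ Set.Icc (0:ℝ) 1,
        |ψ p - ψ q| ≤ ((b-a)+(d-c)+1) * |p - q|) ∧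
      φ 0 = a ∧ φ 1 = b ∧ ψ 0 = c ∧ ψ 1 = d ∧
      ∀ t ∈ Set.Icc (0:ℝ) 1, dist (f (φ t)) (g (ψ t)) ≤ r + ε := by
  obtain ⟨φ, ψ, hφc, hψc, hφm, hψm, hφ0, hφ1, hψ0, hψ1, hd⟩ := h
  have h0 : (0:ℝ) ∈ Icc (0:ℝ) 1 := by constructor <;> norm_num
  have h1 : (1:ℝ) ∈ Icc (0:ℝ) 1 := by constructor <;> norm_num
  have hab : a ≤ b := by
    have := hφm h0 h1 zero_le_one; rw [hφ0, hφ1] at this; exact this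
  have hcd : c ≤ d := by
    have := hψm h0 h1 zero_le_one; rw [hψ0, hψ1] at this; exact this
  set L : ℝ := (b - a) + (d - c) + 1 with hLdef
  have hL : 0 < L := by simp only [hLdef]; linarith
  set σ : ℝ → ℝ := fun x => ((φ x - a) + (ψ x - c) + x) / L with hσdef
  have hσ0 : σ 0 = 0 := by simp [hσdef, hφ0, hψ0]
  have hσ1 : σ 1 = 1 := by
    simp only [hσdef, hφ1, hψ1]
    field_simp
    linarith
  have hσmono : StrictMonoOn σ (Icc 0 1) := by
    intro x hx y hy hxy
    have h1 := hφm hx hy hxy.le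
    have h2 := hψm hx hy hxy.le
    have : (φ x - a) + (ψ x - c) + x < (φ y - a) + (ψ y - c) + y := by linarith
    exact (div_lt_div_iff_of_pos_right hL).mpr this
  have hσc : ContinuousOn σ (Icc 0 1) := by
    apply ContinuousOn.div_const
    exact ((hφc.sub continuousOn_const).add (hψc.sub continuousOn_const)).add
      (continuousOn_id)
  have hIVT : ∀ u, u ∈ Icc (0:ℝ) 1 → ∃ x, x ∈ Icc (0:ℝ) 1 ∧ σ x = u := by
    intro u hu
    have hsub := intermediate_value_Icc zero_le_one hσc
    rw [hσ0, hσ1] at hsub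
    obtain ⟨x, hx, hxu⟩ := hsub hu
    exact ⟨x, hx, hxu⟩
  choose! τ hτmem hτeq using hIVT
  have hτmono : ∀ u ∈ Icc (0:ℝ) 1, ∀ v ∈ Icc (0:ℝ) 1, u ≤ v → τ u ≤ τ v := by
    intro u hu v hv huv
    by_contra hcon
    push_neg at hcon
    have := hσmono (hτmem v hv) (hτmem u hu) hcon
    rw [hτeq u hu, hτeq v hv] at this
    linarith
  have hτ0 : τ 0 = 0 := by
    apply hσmono.injOn (hτmem 0 h0) h0
    rw [hτeq 0 h0, hσ0]
  have hτ1 : τ 1 = 1 := by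
    apply hσmono.injOn (hτmem 1 h1) h1
    rw [hτeq 1 h1, hσ1]
  -- key inequality
  have key : ∀ x ∈ Icc (0:ℝ) 1, ∀ y ∈ Icc (0:ℝ) 1, x ≤ y →
      φ y - φ x ≤ L * (σ y - σ x) ∧ ψ y - ψ x ≤ L * (σ y - σ x) := by
    intro x hx y hy hxy
    have h1 := hφm hx hy hxy
    have h2 := hψm hx hy hxy
    have heq : L * (σ y - σ x) = (φ y - φ x) + (ψ y - ψ x) + (y - x) := by
      simp only [hσdef]
      field_simp
      ring
    constructor <;> [skip; skip] <;> rw [heq] <;> linarith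
  refine ⟨φ ∘ τ, ψ ∘ τ, ?_, ?_, ?_, ?_, ?_, ?_, ?_, ?_, ?_⟩
  · intro u hu v hv huv
    exact hφm (hτmem u hu) (hτmem v hv) (hτmono u hu v hv huv)
  · intro u hu v hv huv
    exact hψm (hτmem u hu) (hτmem v hv) (hτmono u hu v hv huv)
  · -- Lipschitz for φ ∘ τ
    have key2 : ∀ p ∈ Icc (0:ℝ) 1, ∀ q ∈ Icc (0:ℝ) 1, p ≤ q →
        |(φ ∘ τ) p - (φ ∘ τ) q| ≤ L * |p - q| := by
      intro p hp q hq hpq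
      have hm := hφm (hτmem p hp) (hτmem q hq) (hτmono p hp q hq hpq)
      have hk := (key (τ p) (hτmem p hp) (τ q) (hτmem q hq) (hτmono p hp q hq hpq)).1
      rw [hτeq p hp, hτeq q hq] at hk
      rw [abs_sub_comm, abs_of_nonneg (by simpa using hm), abs_sub_comm,
        abs_of_nonneg (by linarith)]
      exact hk
    intro p hp q hq
    rcases le_total p q with hpq | hpq
    · exact key2 p hp q hq hpq
    · rw [abs_sub_comm, abs_sub_comm p q]; exact key2 q hq p hp hpq
  · -- Lipschitz for ψ ∘ τ
    have key2 : ∀ p ∈ Icc (0:ℝ) 1, ∀ q ∈ Icc (0:ℝ) 1, p ≤ q →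
        |(ψ ∘ τ) p - (ψ ∘ τ) q| ≤ L * |p - q| := by
      intro p hp q hq hpq
      have hm := hψm (hτmem p hp) (hτmem q hq) (hτmono p hp q hq hpq)
      have hk := (key (τ p) (hτmem p hp) (τ q) (hτmem q hq) (hτmono p hp q hq hpq)).2
      rw [hτeq p hp, hτeq q hq] at hk
      rw [abs_sub_comm, abs_of_nonneg (by simpa using hm), abs_sub_comm,
        abs_of_nonneg (by linarith)]
      exact hk
    intro p hp q hq
    rcases le_total p q with hpq | hpq
    · exact key2 p hp q hq hpq
    · rw [abs_sub_comm, abs_sub_comm p q]; exact key2 q hq p hp hpq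
  · show φ (τ 0) = a; rw [hτ0, hφ0]
  · show φ (τ 1) = b; rw [hτ1, hφ1]
  · show ψ (τ 0) = c; rw [hτ0, hψ0]
  · show ψ (τ 1) = d; rw [hτ1, hψ1]
  · intro u hu
    exact hd (τ u) (hτmem u hu)

theorem frechet_piecewise_affine_attained {n : ℕ}
    (f g : ℝ → EuclideanSpace ℝ (Fin n))
    (hf : Continuous f) (hg : Continuous g) (r : ℝ) (hr : 0 ≤ r)
    (a b c d : ℝ) (hab : a ≤ b) (hcd : c ≤ d)
    (N M : ℕ) (t s : ℕ → ℝ)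
    (ht0 : t 0 = a) (htN : t N = b) (htmono : ∀ i < N, t i < t (i+1))
    (hs0 : s 0 = c) (hsM : s M = d) (hsmono : ∀ j < M, s j < s (j+1))
    (hfaff : ∀ i < N, ∀ l ∈ Set.Icc (0:ℝ) 1,
      f ((1 - l) * t i + l * t (i+1)) = (1 - l) • f (t i) + l • f (t (i+1)))
    (hgaff : ∀ j < M, ∀ l ∈ Set.Icc (0:ℝ) 1,
      g ((1 - l) * s j + l * s (j+1)) = (1 - l) • g (s j) + l • g (s (j+1)))
    (H : FrechetLE f g a b c d r) :
    ∃ φ ψ : ℝ → ℝ,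
      ContinuousOn φ (Set.Icc 0 1) ∧ ContinuousOn ψ (Set.Icc 0 1) ∧
      MonotoneOn φ (Set.Icc 0 1) ∧ MonotoneOn ψ (Set.Icc 0 1) ∧
      φ 0 = a ∧ φ 1 = b ∧ ψ 0 = c ∧ ψ 1 = d ∧
      ∀ τ ∈ Set.Icc (0:ℝ) 1, dist (f (φ τ)) (g (ψ τ)) ≤ r := by
  classical
  have h0 : (0:ℝ) ∈ Icc (0:ℝ) 1 := by constructor <;> norm_num
  have h1 : (1:ℝ) ∈ Icc (0:ℝ) 1 := by constructor <;> norm_num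
  set L : ℝ := (b - a) + (d - c) + 1 with hLdef
  have hL : 0 < L := by simp only [hLdef]; linarith
  set I01 := Icc (0:ℝ) 1
  set S : ℕ → Set ((I01 → Icc a b) × (I01 → Icc c d)) := fun k =>
    {w | (∀ p q : I01, (p:ℝ) ≤ (q:ℝ) → (w.1 p : ℝ) ≤ (w.1 q : ℝ)) ∧
         (∀ p q : I01, (p:ℝ) ≤ (q:ℝ) → (w.2 p : ℝ) ≤ (w.2 q : ℝ)) ∧
         (∀ p q : I01, |(w.1 p : ℝ) - (w.1 q : ℝ)| ≤ L * |(p:ℝ) - (q:ℝ)|) ∧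
         (∀ p q : I01, |(w.2 p : ℝ) - (w.2 q : ℝ)| ≤ L * |(p:ℝ) - (q:ℝ)|) ∧
         ((w.1 ⟨0, h0⟩ : ℝ) = a) ∧ ((w.1 ⟨1, h1⟩ : ℝ) = b) ∧
         ((w.2 ⟨0, h0⟩ : ℝ) = c) ∧ ((w.2 ⟨1, h1⟩ : ℝ) = d) ∧
         (∀ p : I01, dist (f (w.1 p)) (g (w.2 p)) ≤ r + 1/(k+1))} with hSdef
  -- continuity of evaluations
  have c1 : ∀ p : I01, Continuous fun w : ((I01 → Icc a b) × (I01 → Icc c d)) => (w.1 p : ℝ) :=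
    fun p => continuous_subtype_val.comp ((continuous_apply p).comp continuous_fst)
  have c2 : ∀ p : I01, Continuous fun w : ((I01 → Icc a b) × (I01 → Icc c d)) => (w.2 p : ℝ) :=
    fun p => continuous_subtype_val.comp ((continuous_apply p).comp continuous_snd)
  have hclosed : ∀ k, IsClosed (S k) := by
    intro k
    simp only [hSdef, setOf_and]
    refine IsClosed.inter ?_ (IsClosed.inter ?_ (IsClosed.inter ?_ (IsClosed.inter ?_
      (IsClosed.inter ?_ (IsClosed.inter ?_ (IsClosed.inter ?_ (IsClosed.inter ?_ ?_)))))))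
    · rw [setOf_forall]
      refine isClosed_iInter fun p => ?_
      rw [setOf_forall]
      refine isClosed_iInter fun q => ?_
      by_cases hpq : (p:ℝ) ≤ (q:ℝ)
      · simp only [hpq, true_implies]
        exact isClosed_le (c1 p) (c1 q)
      · simp only [hpq, false_implies, setOf_true]
        exact isClosed_univ
    · rw [setOf_forall]
      refine isClosed_iInter fun p => ?_
      rw [setOf_forall]
      refine isClosed_iInter fun q => ?_
      by_cases hpq : (p:ℝ) ≤ (q:ℝ)
      · simp only [hpq, true_implies]
        exact isClosed_le (c2 p) (c2 q)
      · simp only [hpq, false_implies, setOf_true]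
        exact isClosed_univ
    · rw [setOf_forall]
      refine isClosed_iInter fun p => ?_
      rw [setOf_forall]
      refine isClosed_iInter fun q => ?_
      exact isClosed_le (continuous_abs.comp ((c1 p).sub (c1 q))) continuous_const
    · rw [setOf_forall]
      refine isClosed_iInter fun p => ?_
      rw [setOf_forall]
      refine isClosed_iInter fun q => ?_
      exact isClosed_le (continuous_abs.comp ((c2 p).sub (c2 q))) continuous_const
    · exact isClosed_eq (c1 _) continuous_const
    · exact isClosed_eq (c1 _) continuous_const
    · exact isClosed_eq (c2 _) continuous_const
    · exact isClosed_eq (c2 _) continuous_const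
    · rw [setOf_forall]
      refine isClosed_iInter fun p => ?_
      refine isClosed_le (Continuous.dist ?_ ?_) continuous_const
      · exact hf.comp (c1 p)
      · exact hg.comp (c2 p)
  have hnonempty : ∀ k, (S k).Nonempty := by
    intro k
    have hε : (0:ℝ) < 1/(k+1) := by positivity
    obtain ⟨φ, ψ, hφm, hψm, hφlip, hψlip, hφ0, hφ1, hψ0, hψ1, hd⟩ :=
      frechet_lipschitz_reparam f g a b c d r (1/(k+1)) (H (1/(k+1)) hε)
    have hφmem : ∀ p : I01, φ (p:ℝ) ∈ Icc a b := by
      intro p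
      constructor
      · rw [← hφ0]; exact hφm h0 p.2 p.2.1
      · rw [← hφ1]; exact hφm p.2 h1 p.2.2
    have hψmem : ∀ p : I01, ψ (p:ℝ) ∈ Icc c d := by
      intro p
      constructor
      · rw [← hψ0]; exact hψm h0 p.2 p.2.1
      · rw [← hψ1]; exact hψm p.2 h1 p.2.2
    refine ⟨⟨fun p => ⟨φ p, hφmem p⟩, fun p => ⟨ψ p, hψmem p⟩⟩, ?_, ?_, ?_, ?_, ?_, ?_,
      ?_, ?_, ?_⟩
    · intro p q hpq; exact hφm p.2 q.2 hpq
    · intro p q hpq; exact hψm p.2 q.2 hpq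
    · intro p q; exact hφlip p p.2 q q.2
    · intro p q; exact hψlip p p.2 q q.2
    · exact hφ0
    · exact hφ1
    · exact hψ0
    · exact hψ1
    · intro p; exact hd p p.2
  have hsub : ∀ k, S (k+1) ⊆ S k := by
    intro k w hw
    obtain ⟨hm1, hm2, hl1, hl2, he1, he2, he3, he4, hdist⟩ := hw
    refine ⟨hm1, hm2, hl1, hl2, he1, he2, he3, he4, fun p => (hdist p).trans ?_⟩
    have : (1:ℝ)/(k+1+1) ≤ 1/(k+1) := by
      apply one_div_le_one_div_of_le
      · positivity
      · push_cast; linarith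
    push_cast
    push_cast at this
    linarith
  haveI : CompactSpace (Icc a b) := isCompact_iff_compactSpace.mp isCompact_Icc
  haveI : CompactSpace (Icc c d) := isCompact_iff_compactSpace.mp isCompact_Icc
  have hScompact : IsCompact (S 0) := (hclosed 0).isCompact
  obtain ⟨w, hw⟩ := IsCompact.nonempty_iInter_of_sequence_nonempty_isCompact_isClosed
    S hsub hnonempty hScompact hclosed
  simp only [mem_iInter] at hw
  -- extract the properties
  have hw0 := hw 0
  obtain ⟨hm1, hm2, hl1, hl2, he1, he2, he3, he4, _⟩ := hw0
  have hdist : ∀ p : I01, ∀ k : ℕ, dist (f (w.1 p)) (g (w.2 p)) ≤ r + 1/(k+1) :=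
    fun p k => (hw k).2.2.2.2.2.2.2.2 p
  -- continuity of the coordinate maps
  have hc1 : Continuous fun p : I01 => (w.1 p : ℝ) := by
    apply LipschitzWith.continuous (K := L.toNNReal)
    apply LipschitzWith.of_dist_le_mul
    intro p q
    rw [Real.dist_eq, Subtype.dist_eq, Real.dist_eq, Real.coe_toNNReal L hL.le]
    exact hl1 p q
  have hc2 : Continuous fun p : I01 => (w.2 p : ℝ) := by
    apply LipschitzWith.continuous (K := L.toNNReal)
    apply LipschitzWith.of_dist_le_mul
    intro p q
    rw [Real.dist_eq, Subtype.dist_eq, Real.dist_eq, Real.coe_toNNReal L hL.le]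
    exact hl2 p q
  set φ : ℝ → ℝ := fun x => (w.1 (projIcc 0 1 zero_le_one x) : ℝ) with hφdef
  set ψ : ℝ → ℝ := fun x => (w.2 (projIcc 0 1 zero_le_one x) : ℝ) with hψdef
  have hproj : ∀ (x : ℝ) (hx : x ∈ Icc (0:ℝ) 1),
      projIcc 0 1 zero_le_one x = ⟨x, hx⟩ :=
    fun x hx => projIcc_of_mem zero_le_one hx
  refine ⟨φ, ψ, ?_, ?_, ?_, ?_, ?_, ?_, ?_, ?_, ?_⟩
  · exact (hc1.comp continuous_projIcc).continuousOn
  · exact (hc2.comp continuous_projIcc).continuousOn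
  · intro x hx y hy hxy
    simp only [hφdef, hproj x hx, hproj y hy]
    exact hm1 _ _ hxy
  · intro x hx y hy hxy
    simp only [hψdef, hproj x hx, hproj y hy]
    exact hm2 _ _ hxy
  · simp only [hφdef, hproj 0 h0]; exact he1
  · simp only [hφdef, hproj 1 h1]; exact he2
  · simp only [hψdef, hproj 0 h0]; exact he3
  · simp only [hψdef, hproj 1 h1]; exact he4
  · intro τ hτ
    simp only [hφdef, hψdef, hproj τ hτ]
    apply le_of_forall_pos_le_add
    intro ε hε
    obtain ⟨k, hk⟩ := exists_nat_one_div_lt hε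
    calc dist (f (w.1 ⟨τ, hτ⟩)) (g (w.2 ⟨τ, hτ⟩)) ≤ r + 1/(k+1) := hdist _ k
      _ ≤ r + ε := by push_cast at hk ⊢; linarith
end

section
/- Let E be a metric space, let p, q : ℕ → E, and let r ≥ 0. Let a ≤ b and c ≤ d be natural numbers and let i satisfy a ≤ i ≤ b. If the discrete Fréchet distance of p on [a,b] and q on [c,d] is at most r, then there exists j with c ≤ j ≤ d such that the discrete Fréchet distance of p on [a,i] and q on [c,j] is at most r and the discrete Fréchet distance of p on [i,b] and q on [j,d] is at most r. -/
theorem discrete_frechet_split {E : Type*} [MetricSpace E]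
    (p q : ℕ → E) (r : ℝ) (hr : 0 ≤ r)
    (a b c d i : ℕ) (hab : a ≤ b) (hcd : c ≤ d) (hai : a ≤ i) (hib : i ≤ b)
    (H : DiscreteFrechetLE p q a b c d r) :
    ∃ j : ℕ, c ≤ j ∧ j ≤ d ∧
      DiscreteFrechetLE p q a i c j r ∧ DiscreteFrechetLE p q i b j d r := by
  obtain ⟨K, σ, ⟨h0, hK, hstep⟩, hdist⟩ := H
  -- monotonicity of both coordinates
  have mono : ∀ n, n ≤ K → ∀ m, m ≤ n → (σ m).1 ≤ (σ n).1 ∧ (σ m).2 ≤ (σ n).2 := by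
    intro n
    induction n with
    | zero =>
      intro _ m hm
      have : m = 0 := Nat.le_zero.mp hm
      subst this; exact ⟨le_rfl, le_rfl⟩
    | succ n ih =>
      intro hnK m hm
      rcases Nat.eq_or_lt_of_le hm with h | h
      · subst h; exact ⟨le_rfl, le_rfl⟩
      · have hm' : m ≤ n := Nat.lt_succ_iff.mp h
        obtain ⟨h1, h2⟩ := ih (Nat.le_of_succ_le hnK) m hm'
        rcases hstep n (Nat.lt_of_lt_of_le (Nat.lt_succ_self n) hnK) with h | h | h <;>
          simp [h] <;> omega
  -- find k₀ with (σ k₀).1 = i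
  classical
  have hk : ∃ k₀, k₀ ≤ K ∧ (σ k₀).1 = i := by
    have hex : ∃ k, i ≤ (σ k).1 ∧ k ≤ K := ⟨K, by rw [hK]; exact hib, le_rfl⟩
    obtain ⟨hge, hk₀K⟩ := Nat.find_spec hex
    refine ⟨Nat.find hex, hk₀K, ?_⟩
    rcases Nat.eq_zero_or_pos (Nat.find hex) with h | h
    · have h0' : (σ 0).1 = a := by rw [h0]
      rw [h] at hge ⊢; omega
    · have hprev := Nat.find_min hex (show Nat.find hex - 1 < Nat.find hex by omega)
      have hlt : (σ (Nat.find hex - 1)).1 < i := by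
        by_contra hc; push_neg at hc; exact hprev ⟨hc, by omega⟩
      have hs := hstep (Nat.find hex - 1) (by omega)
      have heq : Nat.find hex - 1 + 1 = Nat.find hex := by omega
      rw [heq] at hs
      have hle : (σ (Nat.find hex)).1 ≤ (σ (Nat.find hex - 1)).1 + 1 := by
        rcases hs with h' | h' | h' <;> rw [h'] <;> simp
      omega
  obtain ⟨k₀, hk₀K, hk1⟩ := hk
  refine ⟨(σ k₀).2, ?_, ?_, ?_, ?_⟩
  · have := (mono k₀ hk₀K 0 (Nat.zero_le _)).2
    rw [h0] at this; exact this
  · have := (mono K le_rfl k₀ hk₀K).2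
    rw [hK] at this; exact this
  · refine ⟨k₀, σ, ⟨h0, ?_, fun k hk => hstep k (lt_of_lt_of_le hk hk₀K)⟩,
      fun k hk => hdist k (le_trans hk hk₀K)⟩
    rw [Prod.ext_iff]; exact ⟨hk1, rfl⟩
  · refine ⟨K - k₀, fun k => σ (k₀ + k), ⟨?_, ?_, ?_⟩, ?_⟩
    · show σ (k₀ + 0) = _
      rw [Nat.add_zero, Prod.ext_iff]; exact ⟨hk1, rfl⟩
    · show σ (k₀ + (K - k₀)) = _
      rw [Nat.add_sub_cancel' hk₀K, hK]
    · intro k hk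
      have hs := hstep (k₀ + k) (by omega)
      show σ (k₀ + (k + 1)) = _ ∨ σ (k₀ + (k + 1)) = _ ∨ σ (k₀ + (k + 1)) = _
      rw [← Nat.add_assoc]
      exact hs
    · intro k hk
      exact hdist (k₀ + k) (by omega)
end

section
/- Let E be a metric space, let p, q : ℕ → E, and let δ ≥ 0. Let a₀ ≤ a ≤ a' and c₀ ≤ c ≤ j be natural numbers. If the discrete Fréchet distance of p on [a₀,a'] and q on [c₀,j] is at most δ, then at least one of the following holds: (1) there exists an index m with c ≤ m ≤ j such that the discrete Fréchet distance of p on [a₀,a] and q on [c₀,m] is at most δ and the discrete Fréchet distance of p on [a,a'] and q on [m,j] is at most δ; or (2) there exists an index x with a ≤ x ≤ a' such that the discrete Fréchet distance of p on [a₀,x] and q on [c₀,c] is at most δ and the discrete Fréchet distance of p on [x,a'] and q on [c,j] is at most δ. -/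
lemma coupling_step {a b c d K : ℕ} {σ : ℕ → ℕ × ℕ}
    (h : IsCoupling a b c d K σ) {k : ℕ} (hk : k < K) :
    ((σ k).1 ≤ (σ (k+1)).1 ∧ (σ (k+1)).1 ≤ (σ k).1 + 1) ∧
    ((σ k).2 ≤ (σ (k+1)).2 ∧ (σ (k+1)).2 ≤ (σ k).2 + 1) := by
  rcases h.2.2 k hk with h' | h' | h' <;> simp [h'] <;> omega

lemma coupling_mono {a b c d K : ℕ} {σ : ℕ → ℕ × ℕ}
    (h : IsCoupling a b c d K σ) {k l : ℕ} (hkl : k ≤ l) (hl : l ≤ K) :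
    (σ k).1 ≤ (σ l).1 ∧ (σ k).2 ≤ (σ l).2 := by
  induction l, hkl using Nat.le_induction with
  | base => exact ⟨le_rfl, le_rfl⟩
  | succ n hn ih =>
    have hs := coupling_step h (by omega : n < K)
    have := ih (by omega)
    exact ⟨this.1.trans hs.1.1, this.2.trans hs.2.1⟩

theorem discrete_frechet_case_split {E : Type*} [MetricSpace E]
    (p q : ℕ → E) (δ : ℝ) (hδ : 0 ≤ δ)
    (a₀ a a' c₀ c j : ℕ)
    (h₁ : a₀ ≤ a) (h₂ : a ≤ a') (h₃ : c₀ ≤ c) (h₄ : c ≤ j)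
    (H : DiscreteFrechetLE p q a₀ a' c₀ j δ) :
    (∃ m : ℕ, c ≤ m ∧ m ≤ j ∧
        DiscreteFrechetLE p q a₀ a c₀ m δ ∧ DiscreteFrechetLE p q a a' m j δ) ∨
    (∃ x : ℕ, a ≤ x ∧ x ≤ a' ∧
        DiscreteFrechetLE p q a₀ x c₀ c δ ∧ DiscreteFrechetLE p q x a' c j δ) := by
  obtain ⟨K, σ, hc, hd⟩ := H
  have h0 : σ 0 = (a₀, c₀) := hc.1
  have hK : σ K = (a', j) := hc.2.1
  have hex : ∃ k, k ≤ K ∧ a ≤ (σ k).1 ∧ c ≤ (σ k).2 := ⟨K, le_rfl, by simp [hK, h₂, h₄]⟩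
  classical
  set P : ℕ → Prop := fun k => k ≤ K ∧ a ≤ (σ k).1 ∧ c ≤ (σ k).2 with hP
  have hexP : ∃ k, P k := hex
  set n := Nat.find hexP with hn
  have hPn : P n := Nat.find_spec hexP
  obtain ⟨hnK, hna, hnc⟩ := hPn
  -- at n, at least one coordinate is exactly at the threshold
  have hkey : (σ n).1 = a ∨ (σ n).2 = c := by
    rcases Nat.eq_zero_or_pos n with h | h
    · left
      have := h0
      have : (σ n).1 = a₀ := by rw [h, h0]
      omega
    · have hlt : ¬ P (n - 1) := Nat.find_min hexP (by omega)
      have hs := coupling_step hc (by omega : n - 1 < K)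
      have hsn : n - 1 + 1 = n := by omega
      rw [hsn] at hs
      simp only [hP, not_and, not_le] at hlt
      rcases Nat.lt_or_ge ((σ (n-1)).1) a with h' | h'
      · left; omega
      · rcases Nat.lt_or_ge ((σ (n-1)).2) c with h'' | h''
        · right; omega
        · exact absurd (hlt (by omega)) (by push_neg; exact ⟨h', h''⟩)
  -- mono bounds to K
  have hmK := coupling_mono hc hnK le_rfl
  rw [hK] at hmK
  -- the two halves
  rcases hkey with hka | hkc
  · left
    refine ⟨(σ n).2, hnc, hmK.2, ?_, ?_⟩
    · exact ⟨n, σ, ⟨h0, by rw [← hka], fun k hk => hc.2.2 k (by omega)⟩,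
        fun k hk => hd k (by omega)⟩
    · refine ⟨K - n, fun k => σ (n + k), ⟨?_, ?_, ?_⟩, ?_⟩
      · simp [← hka]
      · show σ (n + (K - n)) = (a', j)
        rw [Nat.add_sub_cancel' hnK, hK]
      · intro k hk
        have h' := hc.2.2 (n + k) (by omega)
        have he : n + (k + 1) = n + k + 1 := by omega
        show σ (n + (k+1)) = _ ∨ σ (n + (k+1)) = _ ∨ σ (n + (k+1)) = _
        rw [he]; exact h'
      · intro k hk; exact hd _ (by omega)
  · right
    refine ⟨(σ n).1, hna, hmK.1, ?_, ?_⟩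
    · exact ⟨n, σ, ⟨h0, by rw [← hkc], fun k hk => hc.2.2 k (by omega)⟩,
        fun k hk => hd k (by omega)⟩
    · refine ⟨K - n, fun k => σ (n + k), ⟨?_, ?_, ?_⟩, ?_⟩
      · simp [← hkc]
      · show σ (n + (K - n)) = (a', j)
        rw [Nat.add_sub_cancel' hnK, hK]
      · intro k hk
        have h' := hc.2.2 (n + k) (by omega)
        have he : n + (k + 1) = n + k + 1 := by omega
        show σ (n + (k+1)) = _ ∨ σ (n + (k+1)) = _ ∨ σ (n + (k+1)) = _
        rw [he]; exact h'
      · intro k hk; exact hd _ (by omega)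
end

section
/- Let E be a metric space, let p, q : ℕ → E, and let r ≥ 0. Let a ≤ x ≤ y ≤ b and c ≤ d be natural numbers. If the discrete Fréchet distance of p on [a,b] and q on [c,d] is at most r, then there exist natural numbers u, v with c ≤ u ≤ v ≤ d such that the discrete Fréchet distance of p on [x,y] and q on [u,v] is at most r. -/
private lemma step_ivt (f : ℕ → ℕ) :
    ∀ (K : ℕ), (∀ k < K, f (k+1) = f k ∨ f (k+1) = f k + 1) →
    ∀ t, f 0 ≤ t → t ≤ f K → ∃ k ≤ K, f k = t := by
  intro K
  induction K with
  | zero => intro _ t h0 hK; exact ⟨0, le_refl 0, le_antisymm h0 hK⟩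
  | succ K ih =>
    intro hstep t h0 hK
    by_cases ht : t ≤ f K
    · obtain ⟨k, hk, hfk⟩ := ih (fun k hk => hstep k (hk.trans (Nat.lt_succ_self K))) t h0 ht
      exact ⟨k, hk.trans (Nat.le_succ K), hfk⟩
    · push_neg at ht
      refine ⟨K + 1, le_refl _, ?_⟩
      rcases hstep K (Nat.lt_succ_self K) with h | h
      · omega
      · omega

private lemma step_mono (f : ℕ → ℕ) (K : ℕ)
    (hstep : ∀ k < K, f (k+1) = f k ∨ f (k+1) = f k + 1) :
    ∀ j ≤ K, ∀ i ≤ j, f i ≤ f j := by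
  intro j
  induction j with
  | zero => intro _ i hi; rw [Nat.le_zero.mp hi]
  | succ j ih =>
    intro hj i hi
    rcases Nat.le_succ_iff.mp hi with hi' | hi'
    · have := ih (by omega) i hi'
      rcases hstep j (by omega) with h | h <;> omega
    · rw [hi']

theorem discrete_frechet_subcurve {E : Type*} [MetricSpace E]
    (p q : ℕ → E) (r : ℝ) (hr : 0 ≤ r)
    (a x y b c d : ℕ)
    (hax : a ≤ x) (hxy : x ≤ y) (hyb : y ≤ b) (hcd : c ≤ d)
    (H : DiscreteFrechetLE p q a b c d r) :
    ∃ u v : ℕ, c ≤ u ∧ u ≤ v ∧ v ≤ d ∧ DiscreteFrechetLE p q x y u v r := by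
  obtain ⟨K, σ, ⟨h0, hK, hstep⟩, hdist⟩ := H
  set f : ℕ → ℕ := fun k => (σ k).1 with hf
  set g : ℕ → ℕ := fun k => (σ k).2 with hg
  have hfstep : ∀ k < K, f (k+1) = f k ∨ f (k+1) = f k + 1 := by
    intro k hk
    rcases hstep k hk with h | h | h <;> simp [hf, h]
  have hgstep : ∀ k < K, g (k+1) = g k ∨ g (k+1) = g k + 1 := by
    intro k hk
    rcases hstep k hk with h | h | h <;> simp [hg, h]
  have hf0 : f 0 = a := by simp [hf, h0]
  have hfK : f K = b := by simp [hf, hK]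
  have hg0 : g 0 = c := by simp [hg, h0]
  have hgK : g K = d := by simp [hg, hK]
  -- find k2 with f k2 = y
  obtain ⟨k2, hk2K, hfk2⟩ := step_ivt f K hfstep y (by omega) (by omega)
  -- find k1 ≤ k2 with f k1 = x
  obtain ⟨k1, hk12, hfk1⟩ := step_ivt f k2 (fun k hk => hfstep k (by omega)) x
    (by omega) (by omega)
  refine ⟨g k1, g k2, ?_, ?_, ?_, ?_⟩
  · have := step_mono g K hgstep k1 (by omega) 0 (by omega); omega
  · exact step_mono g K hgstep k2 hk2K k1 hk12
  · have := step_mono g K hgstep K (le_refl K) k2 hk2K; omega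
  · refine ⟨k2 - k1, fun k => σ (k1 + k), ⟨?_, ?_, ?_⟩, ?_⟩
    · show σ (k1 + 0) = (x, g k1)
      rw [Nat.add_zero]
      exact Prod.ext hfk1 rfl
    · show σ (k1 + (k2 - k1)) = (y, g k2)
      rw [Nat.add_sub_cancel' hk12]
      exact Prod.ext hfk2 rfl
    · intro k hk
      have h1 : k1 + k < K := by omega
      have h2 := hstep (k1 + k) h1
      exact h2
    · intro k hk
      exact hdist (k1 + k) (by omega)
end

section
/- Let E be a metric space, let p, q : ℕ → E, and let δ ≥ 0. Define R : ℕ → ℕ → Prop recursively by: R 0 0 ↔ dist (p 0) (q 0) ≤ δ; R (i+1) 0 ↔ dist (p (i+1)) (q 0) ≤ δ ∧ R i 0; R 0 (j+1) ↔ dist (p 0) (q (j+1)) ≤ δ ∧ R 0 j; and R (i+1) (j+1) ↔ dist (p (i+1)) (q (j+1)) ≤ δ ∧ (R i (j+1) ∨ R (i+1) j ∨ R i j). Then for all natural numbers i and j, R i j holds if and only if the discrete Fréchet distance of p on [0,i] and q on [0,j] is at most δ. -/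
lemma frechet_extend {E : Type*} [PseudoMetricSpace E] (p q : ℕ → E) (δ : ℝ)
    {b d b' d' : ℕ}
    (hD : DiscreteFrechetLE p q 0 b 0 d δ)
    (hstep : (b', d') = (b + 1, d) ∨ (b', d') = (b, d + 1) ∨ (b', d') = (b + 1, d + 1))
    (hdist : dist (p b') (q d') ≤ δ) :
    DiscreteFrechetLE p q 0 b' 0 d' δ := by
  obtain ⟨K, σ, ⟨h0, hK, hstep'⟩, hb⟩ := hD
  refine ⟨K + 1, fun k => if k ≤ K then σ k else (b', d'), ⟨?_, ?_, ?_⟩, ?_⟩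
  · simp [h0]
  · simp
  · intro k hk
    rcases Nat.lt_succ_iff_lt_or_eq.mp hk with hk | rfl
    · simp only [Nat.le_of_lt hk, Nat.succ_le_of_lt hk, if_pos]
      exact hstep' k hk
    · simpa [hK, Nat.not_succ_le_self] using hstep
  · intro k hk
    rcases Nat.le_succ_iff_eq_or_le.mp hk with rfl | hk
    · simpa [Nat.not_succ_le_self] using hdist
    · simpa [hk] using hb k hk

theorem discrete_frechet_dp_correct {E : Type*} [MetricSpace E]
    (p q : ℕ → E) (δ : ℝ) (hδ : 0 ≤ δ)
    (R : ℕ → ℕ → Prop)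
    (h00 : R 0 0 ↔ dist (p 0) (q 0) ≤ δ)
    (hi0 : ∀ i : ℕ, R (i+1) 0 ↔ dist (p (i+1)) (q 0) ≤ δ ∧ R i 0)
    (h0j : ∀ j : ℕ, R 0 (j+1) ↔ dist (p 0) (q (j+1)) ≤ δ ∧ R 0 j)
    (hij : ∀ i j : ℕ, R (i+1) (j+1) ↔
      dist (p (i+1)) (q (j+1)) ≤ δ ∧ (R i (j+1) ∨ R (i+1) j ∨ R i j)) :
    ∀ i j : ℕ, R i j ↔ DiscreteFrechetLE p q 0 i 0 j δ := by
  -- forward direction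
  have fwd : ∀ i j : ℕ, R i j → DiscreteFrechetLE p q 0 i 0 j δ := by
    intro i
    induction i with
    | zero =>
      intro j
      induction j with
      | zero =>
        intro h
        exact ⟨0, fun _ => (0, 0), ⟨rfl, rfl, by omega⟩,
          fun k hk => by simpa using h00.mp h⟩
      | succ n ihn =>
        intro h
        obtain ⟨hd, hr⟩ := (h0j n).mp h
        exact frechet_extend p q δ (ihn hr) (Or.inr (Or.inl rfl)) hd
    | succ m ihm =>
      intro j
      induction j with
      | zero =>
        intro h
        obtain ⟨hd, hr⟩ := (hi0 m).mp h
        exact frechet_extend p q δ (ihm 0 hr) (Or.inl rfl) hd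
      | succ n ihn =>
        intro h
        obtain ⟨hd, hr⟩ := (hij m n).mp h
        rcases hr with hr | hr | hr
        · exact frechet_extend p q δ (ihm (n+1) hr) (Or.inl rfl) hd
        · exact frechet_extend p q δ (ihn hr) (Or.inr (Or.inl rfl)) hd
        · exact frechet_extend p q δ (ihm n hr) (Or.inr (Or.inr rfl)) hd
  -- backward direction
  have bwd : ∀ K : ℕ, ∀ σ : ℕ → ℕ × ℕ, ∀ i j : ℕ,
      IsCoupling 0 i 0 j K σ → (∀ k ≤ K, dist (p (σ k).1) (q (σ k).2) ≤ δ) →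
      R i j := by
    intro K
    induction K with
    | zero =>
      rintro σ i j ⟨h0, hK, -⟩ hb
      rw [h0] at hK
      obtain ⟨rfl, rfl⟩ := Prod.mk.injEq .. ▸ hK.symm
      have := hb 0 le_rfl
      rw [h0] at this
      exact h00.mpr this
    | succ K ih =>
      rintro σ i j ⟨h0, hK, hs⟩ hb
      rcases hσK : σ K with ⟨b, d⟩
      have hRbd : R b d :=
        ih σ b d ⟨h0, hσK, fun k hk => hs k (hk.trans (Nat.lt_succ_self K))⟩
          (fun k hk => hb k (hk.trans (Nat.le_succ K)))
      have hstep := hs K (Nat.lt_succ_self K)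
      have hdist := hb (K + 1) le_rfl
      rw [hK, hσK] at hstep
      rw [hK] at hdist
      simp only [Prod.ext_iff] at hstep
      have key1 : ∀ a c : ℕ, dist (p (a + 1)) (q c) ≤ δ → R a c → R (a + 1) c := by
        intro a c hd hr
        cases c with
        | zero => exact (hi0 a).mpr ⟨hd, hr⟩
        | succ n => exact (hij a n).mpr ⟨hd, Or.inl hr⟩
      have key2 : ∀ a c : ℕ, dist (p a) (q (c + 1)) ≤ δ → R a c → R a (c + 1) := by
        intro a c hd hr
        cases a with
        | zero => exact (h0j c).mpr ⟨hd, hr⟩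
        | succ m => exact (hij m c).mpr ⟨hd, Or.inr (Or.inl hr)⟩
      rcases hstep with ⟨rfl, rfl⟩ | ⟨rfl, rfl⟩ | ⟨rfl, rfl⟩
      · exact key1 _ _ (by simpa using hdist) hRbd
      · exact key2 _ _ (by simpa using hdist) hRbd
      · exact (hij b d).mpr ⟨by simpa using hdist, Or.inr (Or.inr hRbd)⟩
  intro i j
  exact ⟨fwd i j, fun ⟨K, σ, hc, hb⟩ => bwd K σ i j hc hb⟩
end
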